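/- arXiv:1103.0077 — 3 statements merged into one kernel-verified Lean document; each statement's English description precedes it below -/
import Mathlib

section
/- Let k ≥ 1 and let Υ ⊆ F_{2,k}. Then the following identity of formal power series in t with coefficients in ℚ[x] holds: (1 + Σ_{n≥1} (t^n/(kn)!) Σ_{F ∈ F_{n,k}} x^{Υ-mch(F)}) · ((1−x) + Σ_{n≥1} ((x−1)^n t^n/(kn)!) · full_n^Υ) = 1 − x. -/
/-- `F` is a filling of the `k × n` rectangle (row `i`, `1 ≤ i ≤ k`, counted from the
bottom; column `j`, `1 ≤ j ≤ n`) with the integers `1, …, kn`, each used exactly once,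
whose entries strictly increase up each column.  Cells outside the rectangle carry `0`. -/
def IsFilling (n k : ℕ) (F : ℕ → ℕ → ℕ) : Prop :=
  (∀ i j, F i j ≠ 0 → 1 ≤ i ∧ i ≤ k ∧ 1 ≤ j ∧ j ≤ n) ∧
  Set.BijOn (fun p : ℕ × ℕ => F p.1 p.2) (Set.Icc 1 k ×ˢ Set.Icc 1 n) (Set.Icc 1 (k * n)) ∧
  ∀ i j, 1 ≤ i → i < k → 1 ≤ j → j ≤ n → F i j < F (i + 1) j

/-- The entries of `F` in columns `i, …, i + j - 1` are in the same relative order as the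
`k × j` pattern `P`; i.e. `F` has a `P`-match starting at position `i`. -/
def MatchAt (j k : ℕ) (P F : ℕ → ℕ → ℕ) (i : ℕ) : Prop :=
  ∀ a b c d, 1 ≤ a → a ≤ k → 1 ≤ b → b ≤ j → 1 ≤ c → c ≤ k → 1 ≤ d → d ≤ j →
    (F a (i - 1 + b) < F c (i - 1 + d) ↔ P a b < P c d)

/-- `full_n^Υ`: the number of fillings `F ∈ F_{n,k}` having `Υ`-matches starting at
every position `1, …, n-1` (for two-column patterns `Υ ⊆ F_{2,k}`). -/
noncomputable def fullCount (n k : ℕ) (U : Set (ℕ → ℕ → ℕ)) : ℕ :=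
  Nat.card {F : ℕ → ℕ → ℕ // IsFilling n k F ∧
    ∀ i, 1 ≤ i → i ≤ n - 1 → ∃ P ∈ U, MatchAt 2 k P F i}

/-- `Υ-mch(F)`: the number of positions `1 ≤ i ≤ n-1` at which `F` has an `Υ`-match. -/
noncomputable def mchCount (n k : ℕ) (U : Set (ℕ → ℕ → ℕ)) (F : ℕ → ℕ → ℕ) : ℕ :=
  Set.ncard {i | 1 ≤ i ∧ i ≤ n - 1 ∧ ∃ P ∈ U, MatchAt 2 k P F i}

/-!
Expand `x ^ mch F = ∑_{S ⊆ matches F} (x - 1) ^ #S` and split each pair `(F, S)` at the last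
position `m < n` not in `S` (position `0` counts). Columns `1, …, m` then form a filling carrying
an arbitrary subset of its own matches, and columns `m + 1, …, n` form a filling that has a match at
every position. Standardizing the values of both pieces gives, for `n ≥ 1`,
`A_n = ∑_{m < n} C(kn, km) A_m (x - 1) ^ (n - 1 - m) full_{n - m}` with
`A_n = ∑_{F ∈ F_{n,k}} x ^ mch F`. After division by `(kn)!`, this is the vanishing of the `t ^ n`
coefficient of the product.
-/

open Finset Polynomial

/-- The pieces of a filling cut between two columns are fillings with other value sets `A`. -/
def IsFillingOn (n k : ℕ) (A : Finset ℕ) (F : ℕ → ℕ → ℕ) : Prop :=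
  (∀ i j, F i j ≠ 0 → 1 ≤ i ∧ i ≤ k ∧ 1 ≤ j ∧ j ≤ n) ∧
  Set.BijOn (fun p : ℕ × ℕ => F p.1 p.2) (Set.Icc 1 k ×ˢ Set.Icc 1 n) A ∧
  ∀ i j, 1 ≤ i → i < k → 1 ≤ j → j ≤ n → F i j < F (i + 1) j

lemma isFilling_iff_isFillingOn {n k : ℕ} {F : ℕ → ℕ → ℕ} :
    IsFilling n k F ↔ IsFillingOn n k (Icc 1 (k * n)) F := by
  rw [IsFilling, IsFillingOn, coe_Icc]

namespace IsFillingOn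

variable {n k : ℕ} {A : Finset ℕ} {F : ℕ → ℕ → ℕ} {i j : ℕ}

lemma mem (hF : IsFillingOn n k A F) (hi : 1 ≤ i) (hik : i ≤ k) (hj : 1 ≤ j) (hjn : j ≤ n) :
    F i j ∈ A :=
  hF.2.1.mapsTo (show (i, j) ∈ Set.Icc 1 k ×ˢ Set.Icc 1 n from ⟨⟨hi, hik⟩, hj, hjn⟩)

lemma eq_zero (hF : IsFillingOn n k A F) (h : ¬(1 ≤ i ∧ i ≤ k ∧ 1 ≤ j ∧ j ≤ n)) : F i j = 0 :=
  not_not.mp (mt (hF.1 i j) h)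

lemma eq_of_apply_eq (hF : IsFillingOn n k A F) {i' j' : ℕ}
    (h : 1 ≤ i ∧ i ≤ k ∧ 1 ≤ j ∧ j ≤ n) (h' : 1 ≤ i' ∧ i' ≤ k ∧ 1 ≤ j' ∧ j' ≤ n)
    (he : F i j = F i' j') : i = i' ∧ j = j' :=
  Prod.mk.inj (hF.2.1.injOn (x₁ := (i, j)) (x₂ := (i', j')) ⟨⟨h.1, h.2.1⟩, h.2.2⟩
    ⟨⟨h'.1, h'.2.1⟩, h'.2.2⟩ he)

lemma mem_insert_zero (hF : IsFillingOn n k A F) (i j : ℕ) : F i j ∈ insert 0 A := by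
  by_cases h : 1 ≤ i ∧ i ≤ k ∧ 1 ≤ j ∧ j ≤ n
  · exact mem_insert_of_mem (hF.mem h.1 h.2.1 h.2.2.1 h.2.2.2)
  · simp [hF.eq_zero h]

end IsFillingOn

lemma finite_setOf_isFillingOn (n k : ℕ) (A : Finset ℕ) : {F | IsFillingOn n k A F}.Finite := by
  let restrict := fun (F : ℕ → ℕ → ℕ) (p : Fin (k + 1) × Fin (n + 1)) => F p.1 p.2
  refine Set.Finite.of_finite_image (f := restrict) ?_ ?_
  · refine (Set.Finite.pi (t := fun _ => ↑(insert 0 A)) fun _ => finite_toSet _).subset ?_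
    rintro _ ⟨F, hF, rfl⟩ p -
    exact hF.mem_insert_zero _ _
  · intro F hF G hG hFG
    funext i j
    by_cases h : i ≤ k ∧ j ≤ n
    · exact congrFun hFG (⟨i, by omega⟩, ⟨j, by omega⟩)
    · rw [hF.eq_zero (by omega), hG.eq_zero (by omega)]

noncomputable def fillings (n k : ℕ) (A : Finset ℕ) : Finset (ℕ → ℕ → ℕ) :=
  (finite_setOf_isFillingOn n k A).toFinset

@[simp] lemma mem_fillings {n k : ℕ} {A : Finset ℕ} {F : ℕ → ℕ → ℕ} :
    F ∈ fillings n k A ↔ IsFillingOn n k A F :=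
  Set.Finite.mem_toFinset _

open Classical in
noncomputable def matchPositions (n k : ℕ) (U : Set (ℕ → ℕ → ℕ)) (F : ℕ → ℕ → ℕ) : Finset ℕ :=
  (Icc 1 (n - 1)).filter fun i => ∃ P ∈ U, MatchAt 2 k P F i

section MatchPositions

variable {n k j : ℕ} {U : Set (ℕ → ℕ → ℕ)} {F G P : ℕ → ℕ → ℕ} {i : ℕ}

lemma mem_matchPositions :
    i ∈ matchPositions n k U F ↔ (1 ≤ i ∧ i ≤ n - 1) ∧ ∃ P ∈ U, MatchAt 2 k P F i := by
  classical
  rw [matchPositions, mem_filter, mem_Icc]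

lemma matchPositions_subset : matchPositions n k U F ⊆ Icc 1 (n - 1) := by
  classical
  exact filter_subset _ _

lemma matchAt_congr_of_lt_iff
    (h : ∀ a b c d, 1 ≤ a → a ≤ k → 1 ≤ b → b ≤ j → 1 ≤ c → c ≤ k → 1 ≤ d → d ≤ j →
      (F a (i - 1 + b) < F c (i - 1 + d) ↔ G a (i - 1 + b) < G c (i - 1 + d))) :
    MatchAt j k P F i ↔ MatchAt j k P G i := by
  constructor <;> intro hm a b c d ha hak hb hbj hc hck hd hdj
  · rw [← h a b c d ha hak hb hbj hc hck hd hdj]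
    exact hm a b c d ha hak hb hbj hc hck hd hdj
  · rw [h a b c d ha hak hb hbj hc hck hd hdj]
    exact hm a b c d ha hak hb hbj hc hck hd hdj

lemma matchAt_congr (h : ∀ a b, 1 ≤ b → b ≤ j → F a (i - 1 + b) = G a (i - 1 + b)) :
    MatchAt j k P F i ↔ MatchAt j k P G i :=
  matchAt_congr_of_lt_iff fun a b c d _ _ hb hbj _ _ hd hdj => by rw [h a b hb hbj, h c d hd hdj]

end MatchPositions

section Relabel

variable {n k : ℕ} {A B : Finset ℕ} {U : Set (ℕ → ℕ → ℕ)} {F : ℕ → ℕ → ℕ} {i j : ℕ}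

def relabel (g : A ≃o B) (F : ℕ → ℕ → ℕ) : ℕ → ℕ → ℕ :=
  fun i j => if h : F i j ∈ A then g ⟨F i j, h⟩ else 0

lemma relabel_of_mem (g : A ≃o B) (h : F i j ∈ A) : relabel g F i j = g ⟨F i j, h⟩ :=
  dif_pos h

lemma IsFillingOn.relabel (hF : IsFillingOn n k A F) (h0A : 0 ∉ A) (g : A ≃o B) :
    IsFillingOn n k B (relabel g F) := by
  have hval : ∀ p ∈ Set.Icc 1 k ×ˢ Set.Icc 1 n, ∃ h : F p.1 p.2 ∈ A,
      _root_.relabel g F p.1 p.2 = g ⟨F p.1 p.2, h⟩ := fun p hp =>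
    ⟨hF.2.1.mapsTo hp, relabel_of_mem g _⟩
  refine ⟨fun i j hne => hF.1 i j ?_, ⟨?_, ?_, ?_⟩, fun i j hi hik hj hjn => ?_⟩
  · intro h0
    simp [_root_.relabel, h0, h0A] at hne
  · intro p hp
    obtain ⟨h, e⟩ := hval p hp
    simp only [e, mem_coe, coe_mem]
  · intro p hp q hq hpq
    obtain ⟨h, e⟩ := hval p hp
    obtain ⟨h', e'⟩ := hval q hq
    simp only [e, e', Subtype.coe_inj, g.apply_eq_iff_eq, Subtype.mk.injEq] at hpq
    exact hF.2.1.injOn hp hq hpq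
  · intro b hb
    obtain ⟨p, hp, hpa⟩ := hF.2.1.surjOn (g.symm ⟨b, hb⟩).2
    obtain ⟨h, e⟩ := hval p hp
    refine ⟨p, hp, ?_⟩
    simp only [e, hpa, Subtype.coe_eta, OrderIso.apply_symm_apply]
  · obtain ⟨h, e⟩ := hval (i, j) ⟨⟨hi, hik.le⟩, hj, hjn⟩
    obtain ⟨h', e'⟩ := hval (i + 1, j) ⟨⟨by omega, hik⟩, hj, hjn⟩
    simp only [e, e', Subtype.coe_lt_coe, g.lt_iff_lt, Subtype.mk_lt_mk]
    exact hF.2.2 i j hi hik hj hjn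

lemma relabel_symm_relabel (hF : IsFillingOn n k A F) (h0B : 0 ∉ B) (g : A ≃o B) :
    relabel g.symm (relabel g F) = F := by
  funext i j
  by_cases h : F i j ∈ A
  · have hB : relabel g F i j ∈ B := by rw [relabel_of_mem g h]; exact coe_mem _
    rw [relabel_of_mem g.symm hB]
    simp only [relabel_of_mem g h, Subtype.coe_eta, OrderIso.symm_apply_apply]
  · have h0 : F i j = 0 := (mem_insert.mp (hF.mem_insert_zero i j)).resolve_right h
    have h0A : 0 ∉ A := h0 ▸ h
    simp [relabel, h0, h0A, h0B]

lemma matchPositions_relabel (hF : IsFillingOn n k A F) (g : A ≃o B) :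
    matchPositions n k U (relabel g F) = matchPositions n k U F := by
  ext i
  simp only [mem_matchPositions]
  refine and_congr_right fun hi => exists_congr fun P => and_congr_right fun _ =>
    matchAt_congr_of_lt_iff fun a b c d ha hak hb hb2 hc hck hd hd2 => ?_
  have hab := hF.mem ha hak (j := i - 1 + b) (by omega) (by omega)
  have hcd := hF.mem hc hck (j := i - 1 + d) (by omega) (by omega)
  rw [relabel_of_mem g hab, relabel_of_mem g hcd, Subtype.coe_lt_coe, g.lt_iff_lt,
    Subtype.mk_lt_mk]

lemma sum_fillings_congr {M : Type*} [AddCommMonoid M] (f : Finset ℕ → M) (hAB : #A = #B)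
    (h0A : 0 ∉ A) (h0B : 0 ∉ B) :
    ∑ F ∈ fillings n k A, f (matchPositions n k U F) =
      ∑ F ∈ fillings n k B, f (matchPositions n k U F) := by
  let g : A ≃o B := (A.orderIsoOfFin rfl).symm.trans (B.orderIsoOfFin hAB.symm)
  refine sum_nbij' (relabel g) (relabel g.symm) (fun F hF => ?_) (fun F hF => ?_)
    (fun F hF => ?_) (fun F hF => ?_) (fun F hF => ?_) <;> rw [mem_fillings] at hF
  · exact mem_fillings.mpr (hF.relabel h0A g)
  · exact mem_fillings.mpr (hF.relabel h0B g.symm)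
  · exact relabel_symm_relabel hF h0B g
  · exact relabel_symm_relabel hF h0A g.symm
  · rw [matchPositions_relabel hF]

end Relabel

section Split

variable {n m k : ℕ} {A A₁ A₂ : Finset ℕ} {F F₁ F₂ : ℕ → ℕ → ℕ}

def leftPart (m : ℕ) (F : ℕ → ℕ → ℕ) : ℕ → ℕ → ℕ :=
  fun i j => if j ≤ m then F i j else 0

def rightPart (m : ℕ) (F : ℕ → ℕ → ℕ) : ℕ → ℕ → ℕ :=
  fun i j => if j = 0 then 0 else F i (j + m)

def glue (m : ℕ) (F₁ F₂ : ℕ → ℕ → ℕ) : ℕ → ℕ → ℕ :=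
  fun i j => if j ≤ m then F₁ i j else F₂ i (j - m)

def leftValues (m k : ℕ) (F : ℕ → ℕ → ℕ) : Finset ℕ :=
  (Icc 1 k ×ˢ Icc 1 m).image fun p => F p.1 p.2

lemma coe_leftValues :
    (leftValues m k F : Set ℕ) = (fun p : ℕ × ℕ => F p.1 p.2) '' (Set.Icc 1 k ×ˢ Set.Icc 1 m) := by
  rw [leftValues, coe_image, coe_product, coe_Icc, coe_Icc]

lemma rect_subset_rect (hm : m ≤ n) :
    (Set.Icc 1 k ×ˢ Set.Icc 1 m : Set (ℕ × ℕ)) ⊆ Set.Icc 1 k ×ˢ Set.Icc 1 n :=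
  Set.prod_mono_right (Set.Icc_subset_Icc_right hm)

namespace IsFillingOn

lemma leftValues_subset (hF : IsFillingOn n k A F) (hm : m ≤ n) : leftValues m k F ⊆ A := by
  rw [← coe_subset, coe_leftValues]
  exact (hF.2.1.mapsTo.mono_left (rect_subset_rect hm)).image_subset

lemma card_leftValues (hF : IsFillingOn n k A F) (hm : m ≤ n) : #(leftValues m k F) = k * m := by
  rw [leftValues, card_image_of_injOn, card_product, Nat.card_Icc, Nat.card_Icc, Nat.add_sub_cancel,
    Nat.add_sub_cancel]
  rw [coe_product, coe_Icc, coe_Icc]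
  exact hF.2.1.injOn.mono (rect_subset_rect hm)

lemma leftPart (hF : IsFillingOn n k A F) (hm : m ≤ n) :
    IsFillingOn m k (leftValues m k F) (leftPart m F) := by
  refine ⟨fun i j h0 => ?_, ?_, fun i j hi hik hj hjm => ?_⟩
  · simp only [_root_.leftPart] at h0
    split_ifs at h0 with hj
    · obtain ⟨h1, h2, h3, -⟩ := hF.1 i j h0
      exact ⟨h1, h2, h3, hj⟩
    · exact absurd rfl h0
  · rw [coe_leftValues]
    refine ((hF.2.1.injOn.mono (rect_subset_rect hm)).bijOn_image).congr fun p hp => ?_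
    simp only [_root_.leftPart, if_pos hp.2.2]
  · simp only [_root_.leftPart, if_pos hjm]
    exact hF.2.2 i j hi hik hj (hjm.trans hm)

lemma rightPart (hF : IsFillingOn n k A F) (hm : m ≤ n) :
    IsFillingOn (n - m) k (A \ leftValues m k F) (rightPart m F) := by
  refine ⟨fun i j h0 => ?_, ⟨?_, ?_, ?_⟩, fun i j hi hik hj hjn => ?_⟩
  · simp only [_root_.rightPart] at h0
    split_ifs at h0 with hj
    · exact absurd rfl h0
    · obtain ⟨h1, h2, -, h4⟩ := hF.1 i (j + m) h0
      exact ⟨h1, h2, by omega, by omega⟩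
  · rintro ⟨i, j⟩ ⟨⟨hi, hik⟩, hj, hjn⟩
    simp only [_root_.rightPart, if_neg (show j ≠ 0 by omega), coe_sdiff, coe_leftValues]
    refine ⟨hF.mem hi hik (by omega) (by omega), ?_⟩
    rintro ⟨⟨i', j'⟩, ⟨⟨hi', hik'⟩, hj', hjm'⟩, he⟩
    have := hF.eq_of_apply_eq ⟨hi', hik', hj', by omega⟩ ⟨hi, hik, by omega, by omega⟩ he
    omega
  · rintro ⟨i, j⟩ ⟨⟨hi, hik⟩, hj, hjn⟩ ⟨i', j'⟩ ⟨⟨hi', hik'⟩, hj', hjn'⟩ he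
    simp only [_root_.rightPart, if_neg (show j ≠ 0 by omega),
      if_neg (show j' ≠ 0 by omega)] at he
    have := hF.eq_of_apply_eq ⟨hi, hik, by omega, by omega⟩ ⟨hi', hik', by omega, by omega⟩ he
    simp only [Prod.mk.injEq]
    omega
  · intro a ha
    rw [coe_sdiff, coe_leftValues] at ha
    obtain ⟨⟨i, j⟩, ⟨⟨hi, hik⟩, hj, hjn⟩, hpa⟩ := hF.2.1.surjOn ha.1
    have hjm : m < j := by
      by_contra hjm
      exact ha.2 ⟨(i, j), ⟨⟨hi, hik⟩, hj, by omega⟩, hpa⟩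
    refine ⟨(i, j - m), ⟨⟨hi, hik⟩, by omega, by omega⟩, ?_⟩
    simp only [_root_.rightPart, if_neg (show j - m ≠ 0 by omega), Nat.sub_add_cancel hjm.le]
    exact hpa
  · simp only [_root_.rightPart, if_neg (show j ≠ 0 by omega)]
    exact hF.2.2 i (j + m) hi hik (by omega) (by omega)

lemma injOn_glue (h₁ : IsFillingOn m k A₁ F₁) (h₂ : IsFillingOn (n - m) k A₂ F₂)
    (hdisj : Disjoint A₁ A₂) :
    Set.InjOn (fun p : ℕ × ℕ => _root_.glue m F₁ F₂ p.1 p.2) (Set.Icc 1 k ×ˢ Set.Icc 1 n) := by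
  rintro ⟨i, j⟩ ⟨⟨hi, hik⟩, hj, hjn⟩ ⟨i', j'⟩ ⟨⟨hi', hik'⟩, hj', hjn'⟩ he
  simp only [_root_.glue] at he
  split_ifs at he with hjm hjm' hjm'
  · exact Prod.ext_iff.mpr (h₁.eq_of_apply_eq ⟨hi, hik, hj, hjm⟩ ⟨hi', hik', hj', hjm'⟩ he)
  · exact absurd (he ▸ h₁.mem hi hik hj hjm)
      (disjoint_right.mp hdisj (h₂.mem hi' hik' (by omega) (by omega)))
  · exact absurd (he ▸ h₂.mem hi hik (by omega) (by omega))
      (disjoint_left.mp hdisj (h₁.mem hi' hik' hj' hjm'))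
  · have := h₂.eq_of_apply_eq ⟨hi, hik, by omega, by omega⟩ ⟨hi', hik', by omega, by omega⟩ he
    simp only [Prod.mk.injEq]
    omega

lemma glue (h₁ : IsFillingOn m k A₁ F₁) (h₂ : IsFillingOn (n - m) k A₂ F₂)
    (hdisj : Disjoint A₁ A₂) (hm : m ≤ n) : IsFillingOn n k (A₁ ∪ A₂) (glue m F₁ F₂) := by
  refine ⟨fun i j h0 => ?_, ⟨?_, h₁.injOn_glue h₂ hdisj, ?_⟩, fun i j hi hik hj hjn => ?_⟩
  · simp only [_root_.glue] at h0
    split_ifs at h0 with hj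
    · obtain ⟨h1, h2, h3, -⟩ := h₁.1 i j h0
      exact ⟨h1, h2, h3, by omega⟩
    · obtain ⟨h1, h2, -, h4⟩ := h₂.1 i (j - m) h0
      exact ⟨h1, h2, by omega, by omega⟩
  · rintro ⟨i, j⟩ ⟨⟨hi, hik⟩, hj, hjn⟩
    simp only [_root_.glue, coe_union, Set.mem_union, mem_coe]
    split_ifs with hjm
    · exact Or.inl (h₁.mem hi hik hj hjm)
    · exact Or.inr (h₂.mem hi hik (by omega) (by omega))
  · intro a ha
    rcases (Set.mem_union _ _ _).mp (coe_union A₁ A₂ ▸ ha) with ha | ha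
    · obtain ⟨⟨i, j⟩, ⟨⟨hi, hik⟩, hj, hjm⟩, hpa⟩ := h₁.2.1.surjOn ha
      refine ⟨(i, j), ⟨⟨hi, hik⟩, hj, by omega⟩, ?_⟩
      simpa only [_root_.glue, if_pos hjm] using hpa
    · obtain ⟨⟨i, j⟩, ⟨⟨hi, hik⟩, hj, hjn⟩, hpa⟩ := h₂.2.1.surjOn ha
      refine ⟨(i, j + m), ⟨⟨hi, hik⟩, by omega, by omega⟩, ?_⟩
      simpa only [_root_.glue, if_neg (show ¬j + m ≤ m by omega), Nat.add_sub_cancel] using hpa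
  · simp only [_root_.glue]
    split_ifs with hjm
    · exact h₁.2.2 i j hi hik hj hjm
    · exact h₂.2.2 i (j - m) hi hik (by omega) (by omega)

end IsFillingOn

lemma glue_leftPart_rightPart : glue m (leftPart m F) (rightPart m F) = F := by
  funext i j
  simp only [glue, leftPart, rightPart]
  split_ifs with hj hj'
  · rfl
  · omega
  · rw [Nat.sub_add_cancel (by omega)]

lemma leftPart_glue (h₁ : IsFillingOn m k A₁ F₁) : leftPart m (glue m F₁ F₂) = F₁ := by
  funext i j
  simp only [leftPart, glue]
  split_ifs with hj
  · rfl
  · exact (h₁.eq_zero (by omega)).symm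

lemma rightPart_glue (h₂ : IsFillingOn (n - m) k A₂ F₂) : rightPart m (glue m F₁ F₂) = F₂ := by
  funext i j
  simp only [rightPart, glue]
  split_ifs with hj hj'
  · exact (h₂.eq_zero (by omega)).symm
  · omega
  · rw [Nat.add_sub_cancel]

lemma leftValues_glue (h₁ : IsFillingOn m k A₁ F₁) : leftValues m k (glue m F₁ F₂) = A₁ := by
  have : leftValues m k (glue m F₁ F₂) = leftValues m k F₁ :=
    image_congr fun p hp => by
      simp only [glue, if_pos (mem_Icc.mp (mem_product.mp hp).2).2]
  rw [this, ← coe_inj, coe_leftValues]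
  exact h₁.2.1.image_eq

end Split

lemma sum_fillings_eq_sum_glue {M : Type*} [AddCommMonoid M] {n m k : ℕ} {C : Finset ℕ}
    (hm : m ≤ n) (φ : (ℕ → ℕ → ℕ) → M) :
    ∑ F ∈ fillings n k C, φ F =
      ∑ A ∈ C.powersetCard (k * m), ∑ F₁ ∈ fillings m k A, ∑ F₂ ∈ fillings (n - m) k (C \ A),
        φ (glue m F₁ F₂) := by
  rw [sum_congr rfl fun A _ => (sum_product' _ _ fun F₁ F₂ => φ (glue m F₁ F₂)).symm, sum_sigma']
  refine sum_nbij' (fun F => ⟨leftValues m k F, leftPart m F, rightPart m F⟩)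
    (fun q => glue m q.2.1 q.2.2) (fun F hF => ?_) (fun q hq => ?_) (fun F _ => ?_)
    (fun q hq => ?_) (fun F _ => ?_)
  · rw [mem_fillings] at hF
    simp only [mem_sigma, mem_powersetCard, mem_product, mem_fillings]
    exact ⟨⟨hF.leftValues_subset hm, hF.card_leftValues hm⟩, hF.leftPart hm, hF.rightPart hm⟩
  · simp only [mem_sigma, mem_powersetCard, mem_product, mem_fillings] at hq
    obtain ⟨⟨hA, -⟩, h₁, h₂⟩ := hq
    rw [mem_fillings, ← union_sdiff_of_subset hA]
    exact h₁.glue h₂ disjoint_sdiff hm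
  · exact glue_leftPart_rightPart
  · simp only [mem_sigma, mem_product, mem_fillings] at hq
    rw [leftValues_glue hq.2.1, leftPart_glue hq.2.1, rightPart_glue hq.2.2]
  · rw [glue_leftPart_rightPart]

section GlueMatches

variable {n m k : ℕ} {U : Set (ℕ → ℕ → ℕ)} {F F₁ F₂ P : ℕ → ℕ → ℕ} {i : ℕ}

lemma matchAt_add_iff (j : ℕ) (hi : 1 ≤ i) :
    MatchAt j k P F (i + m) ↔ MatchAt j k P (fun a c => F a (c + m)) i := by
  have h : ∀ b, i + m - 1 + b = i - 1 + b + m := fun b => by omega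
  simp only [MatchAt, h]

lemma matchAt_glue_add_iff (hi : 1 ≤ i) :
    MatchAt 2 k P (glue m F₁ F₂) (i + m) ↔ MatchAt 2 k P F₂ i := by
  rw [matchAt_add_iff 2 hi]
  exact matchAt_congr fun a b hb _ => by
    simp only [glue, if_neg (show ¬i - 1 + b + m ≤ m by omega), Nat.add_sub_cancel]

lemma filter_matchPositions_glue (hm : m ≤ n) :
    (matchPositions n k U (glue m F₁ F₂)).filter (· < m) = matchPositions m k U F₁ := by
  ext i
  simp only [mem_filter, mem_matchPositions]
  by_cases hi : 1 ≤ i ∧ i < m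
  · have hglue : ∀ P, MatchAt 2 k P (glue m F₁ F₂) i ↔ MatchAt 2 k P F₁ i := fun P =>
      matchAt_congr fun a b _ hb => if_pos (by omega)
    simp only [hglue]
    constructor
    · rintro ⟨⟨-, hP⟩, -⟩
      exact ⟨by omega, hP⟩
    · rintro ⟨-, hP⟩
      exact ⟨⟨by omega, hP⟩, hi.2⟩
  · constructor
    · rintro ⟨⟨hi', -⟩, him⟩
      omega
    · rintro ⟨hi', -⟩
      omega

lemma Icc_subset_matchPositions_glue_iff (hm : m ≤ n) :
    Icc (m + 1) (n - 1) ⊆ matchPositions n k U (glue m F₁ F₂) ↔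
      Icc 1 (n - m - 1) ⊆ matchPositions (n - m) k U F₂ := by
  constructor
  · intro h i hi
    rw [mem_Icc] at hi
    obtain ⟨-, P, hP, hmatch⟩ := mem_matchPositions.mp (h (mem_Icc.mpr (by omega : _ ∧ i + m ≤ _)))
    exact mem_matchPositions.mpr ⟨hi, P, hP, (matchAt_glue_add_iff hi.1).mp hmatch⟩
  · intro h i hi
    rw [mem_Icc] at hi
    obtain ⟨-, P, hP, hmatch⟩ := mem_matchPositions.mp (h (mem_Icc.mpr (by omega : 1 ≤ i - m ∧ _)))
    rw [← matchAt_glue_add_iff (by omega), Nat.sub_add_cancel (by omega)] at hmatch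
    exact mem_matchPositions.mpr ⟨by omega, P, hP, hmatch⟩

end GlueMatches

lemma ite_suffix_succ {R : Type*} [CommRing R] (x : R) {N m : ℕ} {T : Finset ℕ}
    (hN : N + 1 ∈ T) (hm : m < N + 1) :
    (if Icc (m + 1) (N + 1) ⊆ T then x ^ #(T.filter (· < m)) * (x - 1) ^ (N + 1 - m) else 0) =
      (x - 1) * if Icc (m + 1) N ⊆ T.erase (N + 1) then
        x ^ #((T.erase (N + 1)).filter (· < m)) * (x - 1) ^ (N - m) else 0 := by
  have hsub : Icc (m + 1) (N + 1) ⊆ T ↔ Icc (m + 1) N ⊆ T.erase (N + 1) := by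
    simp only [subset_iff, mem_Icc, mem_erase]
    refine ⟨fun h i hi => ⟨by omega, h ⟨hi.1, by omega⟩⟩, fun h i hi => ?_⟩
    rcases eq_or_lt_of_le hi.2 with rfl | hlt
    · exact hN
    · exact (h ⟨hi.1, by omega⟩).2
  have hfilter : T.filter (· < m) = (T.erase (N + 1)).filter (· < m) := by
    ext i
    simp only [mem_filter, mem_erase]
    exact ⟨fun ⟨h, him⟩ => ⟨⟨by omega, h⟩, him⟩, fun ⟨⟨_, h⟩, him⟩ => ⟨h, him⟩⟩
  rw [hfilter, show N + 1 - m = N - m + 1 by omega, pow_succ]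
  by_cases h : Icc (m + 1) N ⊆ T.erase (N + 1)
  · rw [if_pos (hsub.mpr h), if_pos h]
    ring
  · rw [if_neg (mt hsub.mp h), if_neg h, mul_zero]

/-- This is `x ^ #T = ∑_{S ⊆ T} (x - 1) ^ #S` with the `S` grouped by their largest gap
`m ∉ S`, `m ≤ N` (`0` counting as a gap), i.e. by the suffix `Icc (m + 1) N ⊆ S`. -/
lemma pow_card_eq_sum_suffix {R : Type*} [CommRing R] (x : R) :
    ∀ (N : ℕ) (T : Finset ℕ), T ⊆ Icc 1 N →
      x ^ #T = ∑ m ∈ range (N + 1),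
        if Icc (m + 1) N ⊆ T then x ^ #(T.filter (· < m)) * (x - 1) ^ (N - m) else 0
  | 0, T, hT => by
    obtain rfl : T = ∅ := subset_empty.mp (hT.trans (by simp))
    simp
  | N + 1, T, hT => by
    have hlast : T.filter (· < N + 1) = T.erase (N + 1) := by
      ext i
      simp only [mem_filter, mem_erase]
      refine ⟨fun ⟨h, hi⟩ => ⟨by omega, h⟩, fun ⟨hi, h⟩ => ⟨h, ?_⟩⟩
      have := mem_Icc.mp (hT h)
      omega
    rw [sum_range_succ, Icc_eq_empty (by omega), if_pos (empty_subset _), hlast, Nat.sub_self,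
      pow_zero, mul_one]
    by_cases hN : N + 1 ∈ T
    · have hT' : T.erase (N + 1) ⊆ Icc 1 N := fun i hi => by
        have := mem_Icc.mp (hT (mem_of_mem_erase hi))
        have := ne_of_mem_erase hi
        rw [mem_Icc]
        omega
      rw [sum_congr rfl fun m hm => ite_suffix_succ x hN (mem_range.mp hm), ← mul_sum,
        ← pow_card_eq_sum_suffix x N _ hT', ← card_erase_add_one hN, pow_succ]
      ring
    · have hterm : ∀ m ∈ range (N + 1),
          (if Icc (m + 1) (N + 1) ⊆ T then x ^ #(T.filter (· < m)) * (x - 1) ^ (N + 1 - m)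
            else 0) = 0 := fun m hm =>
        if_neg fun h => hN (h (mem_Icc.mpr ⟨by have := mem_range.mp hm; omega, le_rfl⟩))
      rw [sum_congr rfl hterm, sum_const_zero, zero_add, erase_eq_of_notMem hN]

noncomputable def matchPoly (n k : ℕ) (U : Set (ℕ → ℕ → ℕ)) (A : Finset ℕ) : ℚ[X] :=
  ∑ F ∈ fillings n k A, X ^ #(matchPositions n k U F)

noncomputable def fullFillings (n k : ℕ) (U : Set (ℕ → ℕ → ℕ)) (A : Finset ℕ) :
    Finset (ℕ → ℕ → ℕ) :=
  (fillings n k A).filter fun F => Icc 1 (n - 1) ⊆ matchPositions n k U F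

section MatchPoly

variable {n m k : ℕ} {U : Set (ℕ → ℕ → ℕ)} {A B : Finset ℕ}

lemma matchPoly_congr (h : #A = #B) (h0A : 0 ∉ A) (h0B : 0 ∉ B) :
    matchPoly n k U A = matchPoly n k U B :=
  sum_fillings_congr (fun S => X ^ #S) h h0A h0B

lemma card_fullFillings_congr (h : #A = #B) (h0A : 0 ∉ A) (h0B : 0 ∉ B) :
    #(fullFillings n k U A) = #(fullFillings n k U B) := by
  simp only [fullFillings, card_filter]
  exact sum_fillings_congr (fun S => if Icc 1 (n - 1) ⊆ S then 1 else 0) h h0A h0B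

lemma fillings_zero : fillings 0 k ∅ = {0} := by
  ext F
  rw [mem_fillings, mem_singleton]
  refine ⟨fun hF => funext₂ fun i j => hF.eq_zero (by omega), ?_⟩
  rintro rfl
  refine ⟨fun _ _ h => absurd rfl h, ?_, fun _ _ _ _ _ h => by omega⟩
  simp [Set.Icc_eq_empty]

lemma matchPoly_zero : matchPoly 0 k U ∅ = 1 := by
  simp [matchPoly, fillings_zero, matchPositions]

lemma sum_fillings_suffix_eq (hm : m ≤ n) (C : Finset ℕ) :
    ∑ F ∈ fillings n k C, (if Icc (m + 1) (n - 1) ⊆ matchPositions n k U F then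
        X ^ #((matchPositions n k U F).filter (· < m)) * (X - 1) ^ (n - 1 - m) else 0) =
      ∑ A ∈ C.powersetCard (k * m),
        matchPoly m k U A * (X - 1) ^ (n - 1 - m) *
          (#(fullFillings (n - m) k U (C \ A)) : ℚ[X]) := by
  rw [sum_fillings_eq_sum_glue hm]
  refine sum_congr rfl fun A _ => ?_
  rw [matchPoly, sum_mul, sum_mul]
  refine sum_congr rfl fun F₁ _ => ?_
  simp only [Icc_subset_matchPositions_glue_iff hm, filter_matchPositions_glue hm]
  rw [← sum_filter, sum_const, nsmul_eq_mul, fullFillings, mul_comm]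

theorem matchPoly_Icc_eq_sum (hn : 1 ≤ n) :
    matchPoly n k U (Icc 1 (k * n)) =
      ∑ m ∈ range n, ((k * n).choose (k * m) : ℚ[X]) * matchPoly m k U (Icc 1 (k * m)) *
        (X - 1) ^ (n - 1 - m) * (#(fullFillings (n - m) k U (Icc 1 (k * (n - m)))) : ℚ[X]) := by
  calc matchPoly n k U (Icc 1 (k * n))
      = ∑ F ∈ fillings n k (Icc 1 (k * n)), ∑ m ∈ range n,
          if Icc (m + 1) (n - 1) ⊆ matchPositions n k U F then
            X ^ #((matchPositions n k U F).filter (· < m)) * (X - 1) ^ (n - 1 - m) else 0 :=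
        sum_congr rfl fun F _ => by
          rw [pow_card_eq_sum_suffix X (n - 1) _ matchPositions_subset, Nat.sub_add_cancel hn]
    _ = _ := by
      rw [sum_comm]
      refine sum_congr rfl fun m hm => ?_
      have hmn : m ≤ n := (mem_range.mp hm).le
      rw [sum_fillings_suffix_eq hmn]
      have hA : ∀ A ∈ (Icc 1 (k * n)).powersetCard (k * m),
          matchPoly m k U A * (X - 1) ^ (n - 1 - m) *
            (#(fullFillings (n - m) k U (Icc 1 (k * n) \ A)) : ℚ[X]) =
            matchPoly m k U (Icc 1 (k * m)) * (X - 1) ^ (n - 1 - m) *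
              (#(fullFillings (n - m) k U (Icc 1 (k * (n - m)))) : ℚ[X]) := by
        intro A hA
        obtain ⟨hAC, hAcard⟩ := mem_powersetCard.mp hA
        have h0A : 0 ∉ A := fun h => by simpa using hAC h
        rw [matchPoly_congr (B := Icc 1 (k * m)) (by simp [hAcard]) h0A (by simp),
          card_fullFillings_congr (B := Icc 1 (k * (n - m))) (by
            rw [card_sdiff_of_subset hAC, hAcard, Nat.card_Icc, Nat.card_Icc, Nat.mul_sub]; omega)
            (by simp) (by simp)]
      rw [sum_congr rfl hA, sum_const, card_powersetCard, Nat.card_Icc, Nat.add_sub_cancel,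
        nsmul_eq_mul]
      ring

end MatchPoly

section Statement

variable {n k : ℕ} {U : Set (ℕ → ℕ → ℕ)} {F : ℕ → ℕ → ℕ}

lemma mchCount_eq_card : mchCount n k U F = #(matchPositions n k U F) := by
  rw [mchCount, ← Set.ncard_coe_finset]
  congr 1
  ext i
  simp [mem_matchPositions, and_assoc]

lemma finsum_isFilling_eq_matchPoly :
    ∑ᶠ F ∈ {F | IsFilling n k F}, (X : ℚ[X]) ^ mchCount n k U F =
      matchPoly n k U (Icc 1 (k * n)) := by
  have : {F | IsFilling n k F} = ↑(fillings n k (Icc 1 (k * n))) := by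
    ext F
    simp [isFilling_iff_isFillingOn]
  simp only [this, finsum_mem_coe_finset, matchPoly, mchCount_eq_card]

lemma fullCount_eq_card : fullCount n k U = #(fullFillings n k U (Icc 1 (k * n))) := by
  have : {F | IsFilling n k F ∧ ∀ i, 1 ≤ i → i ≤ n - 1 → ∃ P ∈ U, MatchAt 2 k P F i} =
      ↑(fullFillings n k U (Icc 1 (k * n))) := by
    ext F
    simp only [Set.mem_ofPred_eq, fullFillings, coe_filter, mem_fillings,
      isFilling_iff_isFillingOn, subset_iff, mem_Icc, mem_matchPositions]
    exact and_congr_right fun _ =>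
      ⟨fun h i hi => ⟨hi, h i hi.1 hi.2⟩, fun h i h1 h2 => (h ⟨h1, h2⟩).2⟩
  calc fullCount n k U = Nat.card {F | IsFilling n k F ∧
      ∀ i, 1 ≤ i → i ≤ n - 1 → ∃ P ∈ U, MatchAt 2 k P F i} := rfl
    _ = _ := by rw [this, Nat.card_coe_set_eq, Set.ncard_coe_finset]

lemma matchPoly_div_factorial_eq_sum (hn : 1 ≤ n) :
    C ((k * n).factorial : ℚ)⁻¹ * matchPoly n k U (Icc 1 (k * n)) =
      ∑ m ∈ range n, C ((k * m).factorial : ℚ)⁻¹ * matchPoly m k U (Icc 1 (k * m)) *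
        ((X - 1) ^ (n - 1 - m) * C ((fullCount (n - m) k U : ℚ) / (k * (n - m)).factorial)) := by
  rw [matchPoly_Icc_eq_sum hn, mul_sum]
  refine sum_congr rfl fun m hm => ?_
  have hfact : ((k * n).factorial : ℚ) =
      (k * n).choose (k * m) * (k * m).factorial * (k * (n - m)).factorial := by
    rw [Nat.mul_sub]
    exact_mod_cast (Nat.choose_mul_factorial_mul_factorial
      (Nat.mul_le_mul_left k (mem_range.mp hm).le)).symm
  have hC : C ((k * n).factorial : ℚ)⁻¹ * C ((k * n).choose (k * m) : ℚ) *
      C (#(fullFillings (n - m) k U (Icc 1 (k * (n - m)))) : ℚ) =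
      C ((k * m).factorial : ℚ)⁻¹ * C ((fullCount (n - m) k U : ℚ) / (k * (n - m)).factorial) := by
    have hchoose : ((k * n).choose (k * m) : ℚ) ≠ 0 :=
      Nat.cast_ne_zero.mpr (Nat.choose_pos (Nat.mul_le_mul_left k (mem_range.mp hm).le)).ne'
    rw [← C_mul, ← C_mul, ← C_mul, hfact, fullCount_eq_card]
    congr 1
    field_simp
  simp only [← C_eq_natCast]
  linear_combination (matchPoly m k U (Icc 1 (k * m)) * (X - 1) ^ (n - 1 - m)) * hC

end Statement

theorem stmt2_general (k : ℕ) (U : Set (ℕ → ℕ → ℕ)) :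
    (PowerSeries.mk fun n => if n = 0 then (1 : Polynomial ℚ) else
        Polynomial.C (((k * n).factorial : ℚ))⁻¹ *
          ∑ᶠ F ∈ {F : ℕ → ℕ → ℕ | IsFilling n k F},
            (Polynomial.X : Polynomial ℚ) ^ mchCount n k U F) *
    (PowerSeries.mk fun n => if n = 0 then (1 : Polynomial ℚ) - Polynomial.X else
        (Polynomial.X - 1) ^ n *
          Polynomial.C ((fullCount n k U : ℚ) / ((k * n).factorial : ℚ))) =
    PowerSeries.C (R := Polynomial ℚ) (1 - Polynomial.X) := by
  have hcoeff : ∀ n, (if n = 0 then (1 : ℚ[X]) else C ((k * n).factorial : ℚ)⁻¹ *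
      ∑ᶠ F ∈ {F | IsFilling n k F}, (X : ℚ[X]) ^ mchCount n k U F) =
      C ((k * n).factorial : ℚ)⁻¹ * matchPoly n k U (Icc 1 (k * n)) := by
    rintro (_ | n)
    · simp [matchPoly_zero]
    · rw [if_neg n.succ_ne_zero, finsum_isFilling_eq_matchPoly]
  ext n : 1
  rw [PowerSeries.coeff_mul, PowerSeries.coeff_C, Nat.sum_antidiagonal_eq_sum_range_succ_mk]
  simp only [PowerSeries.coeff_mk, hcoeff]
  rcases Nat.eq_zero_or_pos n with rfl | hn
  · simp [matchPoly_zero]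
  rw [sum_range_succ, if_neg hn.ne', Nat.sub_self, if_pos rfl, matchPoly_div_factorial_eq_sum hn,
    sum_mul, ← sum_add_distrib]
  refine sum_eq_zero fun m hm => ?_
  have hmn := mem_range.mp hm
  rw [if_neg (by omega), show n - m = n - 1 - m + 1 by omega, pow_succ]
  ring

/-- Theorem: `(1 + Σ_{n≥1} (t^n/(kn)!) Σ_{F ∈ F_{n,k}} x^{Υ-mch(F)}) ·
((1-x) + Σ_{n≥1} ((x-1)^n t^n/(kn)!) full_n^Υ) = 1 - x` as formal power series in `t`
over `ℚ[x]`. -/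
theorem stmt2 (k : ℕ) (hk : 1 ≤ k) (U : Set (ℕ → ℕ → ℕ))
    (hU : ∀ P ∈ U, IsFilling 2 k P) :
    (PowerSeries.mk fun n => if n = 0 then (1 : Polynomial ℚ) else
        Polynomial.C (((k * n).factorial : ℚ))⁻¹ *
          ∑ᶠ F ∈ {F : ℕ → ℕ → ℕ | IsFilling n k F},
            (Polynomial.X : Polynomial ℚ) ^ mchCount n k U F) *
    (PowerSeries.mk fun n => if n = 0 then (1 : Polynomial ℚ) - Polynomial.X else
        (Polynomial.X - 1) ^ n *
          Polynomial.C ((fullCount n k U : ℚ) / ((k * n).factorial : ℚ))) =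
    PowerSeries.C (R := Polynomial ℚ) (1 - Polynomial.X) :=
  stmt2_general k U
end

section
/- Let j, k ≥ 1 and let Υ ⊆ F_{j,k}. Let A_{n,k}^Υ be the number of F ∈ F_{n,k} with no Υ-matches (A_{0,k}^Υ = 1), and let E_{n,k}^Υ be the number of F ∈ F_{n,k} having exactly one Υ-match, which moreover starts at position n−j+1. Then for all n ≥ 0: binom(k(n+1), k) · A_{n,k}^Υ = A_{n+1,k}^Υ + E_{n+1,k}^Υ. -/
/-- `F` has an `Υ`-match starting at position `i` (for `k × j` patterns `Υ`). -/
def HasUMatch (n j k : ℕ) (U : Set (ℕ → ℕ → ℕ)) (F : ℕ → ℕ → ℕ) (i : ℕ) : Prop :=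
  1 ≤ i ∧ i + j ≤ n + 1 ∧ ∃ P ∈ U, MatchAt j k P F i

/-- `A_{n,k}^Υ`: the number of fillings `F ∈ F_{n,k}` with no `Υ`-matches. -/
noncomputable def noMatchCountJ (n j k : ℕ) (U : Set (ℕ → ℕ → ℕ)) : ℕ :=
  Nat.card {F : ℕ → ℕ → ℕ // IsFilling n k F ∧ ∀ i, ¬ HasUMatch n j k U F i}

/-- `E_{n,k}^Υ`: the number of fillings `F ∈ F_{n,k}` with exactly one `Υ`-match,
which starts at position `n - j + 1`. -/
noncomputable def endMatchCount (n j k : ℕ) (U : Set (ℕ → ℕ → ℕ)) : ℕ :=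
  Nat.card {F : ℕ → ℕ → ℕ // IsFilling n k F ∧
    ∀ i, HasUMatch n j k U F i ↔ i = n + 1 - j}

/-!
Deleting the last column of a filling `F ∈ F_{n+1,k}` and standardizing the remaining entries
gives a filling in `F_{n,k}`; together with the set of the `k` deleted entries this is a bijection
between `F_{n+1,k}` and pairs (`k`-subset of `[k(n+1)]`, filling in `F_{n,k}`), and it preserves
the relative order of the first `n` columns. Hence `binom(k(n+1), k) · A_{n,k}` counts the fillings
in `F_{n+1,k}` without `Υ`-match inside their first `n` columns. Such a filling either has no match
at all or exactly one, starting at the last possible position `n + 2 - j`.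
-/

namespace Finset

variable {t : Finset ℕ} {v y : ℕ}

/-- `t.rank v` is the position of `v ∈ t` in increasing order, counted from `1`, and `t.ofRank`
is its inverse; both are `0` off their domains. -/
noncomputable def rank (t : Finset ℕ) (v : ℕ) : ℕ :=
  if h : v ∈ t then ((t.orderIsoOfFin rfl).symm ⟨v, h⟩ : ℕ) + 1 else 0

noncomputable def ofRank (t : Finset ℕ) (y : ℕ) : ℕ :=
  if h : y - 1 < #t then t.orderIsoOfFin rfl ⟨y - 1, h⟩ else 0

lemma rank_mem_Icc (hv : v ∈ t) : t.rank v ∈ Set.Icc 1 #t := by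
  simp only [rank, dif_pos hv, Set.mem_Icc, le_add_iff_nonneg_left, zero_le, true_and]
  exact ((t.orderIsoOfFin rfl).symm ⟨v, hv⟩).isLt

lemma ofRank_mem (hy : y ∈ Set.Icc 1 #t) : t.ofRank y ∈ t := by
  have h : y - 1 < #t := by grind
  simp only [ofRank, dif_pos h]
  exact (t.orderIsoOfFin rfl ⟨y - 1, h⟩).2

lemma ofRank_rank (hv : v ∈ t) : t.ofRank (t.rank v) = v := by
  have h := ((t.orderIsoOfFin rfl).symm ⟨v, hv⟩).isLt
  simp only [rank, ofRank, dif_pos hv, add_tsub_cancel_right, dif_pos h, Fin.eta,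
    OrderIso.apply_symm_apply]

lemma rank_ofRank (hy : y ∈ Set.Icc 1 #t) : t.rank (t.ofRank y) = y := by
  have h : y - 1 < #t := by grind
  simp only [rank, ofRank, dif_pos h, Subtype.coe_eta, OrderIso.symm_apply_apply]
  grind

lemma strictMonoOn_rank : StrictMonoOn t.rank t := by
  intro v hv w hw hvw
  simp only [rank, dif_pos (mem_coe.1 hv), dif_pos (mem_coe.1 hw), add_lt_add_iff_right,
    Fin.val_fin_lt, OrderIso.lt_iff_lt]
  exact hvw

lemma bijOn_rank : Set.BijOn t.rank t (Set.Icc 1 #t) :=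
  Set.InvOn.bijOn ⟨fun _ hv => ofRank_rank hv, fun _ hy => rank_ofRank hy⟩
    (fun _ hv => rank_mem_Icc hv) (fun _ hy => ofRank_mem hy)

lemma bijOn_ofRank : Set.BijOn t.ofRank (Set.Icc 1 #t) t :=
  Set.InvOn.bijOn ⟨fun _ hy => rank_ofRank hy, fun _ hv => ofRank_rank hv⟩
    (fun _ hy => ofRank_mem hy) (fun _ hv => rank_mem_Icc hv)

lemma strictMonoOn_ofRank : StrictMonoOn t.ofRank (Set.Icc 1 #t) := by
  intro y hy z hz hyz
  rw [← strictMonoOn_rank.lt_iff_lt (ofRank_mem hy) (ofRank_mem hz), rank_ofRank hy,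
    rank_ofRank hz]
  exact hyz

end Finset

open Function
open scoped Finset

theorem Set.BijOn.union_of_disjoint {α β : Type*} {f : α → β} {s₁ s₂ : Set α} {t₁ t₂ : Set β}
    (h₁ : Set.BijOn f s₁ t₁) (h₂ : Set.BijOn f s₂ t₂) (ht : Disjoint t₁ t₂) :
    Set.BijOn f (s₁ ∪ s₂) (t₁ ∪ t₂) := by
  refine h₁.union h₂ ?_
  rintro x (hx | hx) y (hy | hy) hxy
  · exact h₁.injOn hx hy hxy
  · exact (ht.ne_of_mem (h₁.mapsTo hx) (h₂.mapsTo hy) hxy).elim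
  · exact (ht.ne_of_mem (h₁.mapsTo hy) (h₂.mapsTo hx) hxy.symm).elim
  · exact h₂.injOn hx hy hxy

theorem StrictMonoOn.eqOn_id_of_mapsTo {α : Type*} [LinearOrder α] {s : Set α} {f : α → α}
    (hf : StrictMonoOn f s) (hs : s.Finite) (hmaps : Set.MapsTo f s s) : Set.EqOn f id s := by
  have : Finite s := hs
  have hmono : StrictMono (hmaps.restrict f s s) := fun a b hab => hf a.2 b.2 hab
  intro x hx
  exact congrArg Subtype.val (hmono.apply_eq (x := ⟨x, hx⟩))

abbrev cells (n k : ℕ) : Set (ℕ × ℕ) := Set.Icc 1 k ×ˢ Set.Icc 1 n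

lemma cells_succ (n k : ℕ) : cells (n + 1) k = cells n k ∪ Set.Icc 1 k ×ˢ {n + 1} := by
  ext ⟨i, j⟩
  simp only [cells, Set.mem_union, Set.mem_prod, Set.mem_Icc, Set.mem_singleton_iff]
  omega

lemma cells_succ_sdiff (n k : ℕ) : cells (n + 1) k \ Set.Icc 1 k ×ˢ {n + 1} = cells n k := by
  ext ⟨i, j⟩
  simp only [cells, Set.mem_sdiff, Set.mem_prod, Set.mem_Icc, Set.mem_singleton_iff]
  omega

section Filling

variable {n k i j : ℕ} {F : ℕ → ℕ → ℕ}

lemma IsFilling.bijOn (hF : IsFilling n k F) :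
    Set.BijOn (uncurry F) (cells n k) (Set.Icc 1 (k * n)) :=
  hF.2.1

lemma IsFilling.eq_zero (hF : IsFilling n k F) (h : (i, j) ∉ cells n k) : F i j = 0 := by
  by_contra hne
  obtain ⟨hi1, hi2, hj1, hj2⟩ := hF.1 i j hne
  exact h ⟨⟨hi1, hi2⟩, hj1, hj2⟩

lemma IsFilling.strictMonoOn_column (hF : IsFilling n k F) (hj : j ∈ Set.Icc 1 n) :
    StrictMonoOn (F · j) (Set.Icc 1 k) :=
  strictMonoOn_of_lt_succ Set.ordConnected_Icc fun i _ hi hsi => by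
    rw [Order.succ_eq_add_one] at hsi ⊢
    exact hF.2.2 i j hi.1 (by grind) hj.1 hj.2

lemma isFilling_of_bijOn (hzero : ∀ i j, (i, j) ∉ cells n k → F i j = 0)
    (hbij : Set.BijOn (uncurry F) (cells n k) (Set.Icc 1 (k * n)))
    (hcol : ∀ i j, 1 ≤ i → i < k → 1 ≤ j → j ≤ n → F i j < F (i + 1) j) :
    IsFilling n k F := by
  refine ⟨fun i j hne => ?_, hbij, hcol⟩
  by_contra h
  exact hne (hzero i j fun ⟨⟨hi1, hi2⟩, hj1, hj2⟩ => h ⟨hi1, hi2, hj1, hj2⟩)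

lemma IsFilling.ext (hF : IsFilling n k F) {G : ℕ → ℕ → ℕ} (hG : IsFilling n k G)
    (h : Set.EqOn (uncurry F) (uncurry G) (cells n k)) : F = G := by
  funext i j
  by_cases hij : (i, j) ∈ cells n k
  · exact h hij
  · rw [hF.eq_zero hij, hG.eq_zero hij]

lemma finite_setOf_isFilling (n k : ℕ) : {F | IsFilling n k F}.Finite := by
  let restrict (F : ℕ → ℕ → ℕ) : Fin (k + 1) × Fin (n + 1) → ℕ := fun p => F p.1 p.2
  refine Set.Finite.of_finite_image (f := restrict)
    ((Set.Finite.pi' fun _ : Fin (k + 1) × Fin (n + 1) => Set.finite_Iic (k * n)).subset ?_) ?_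
  · rintro _ ⟨F, hF, rfl⟩ p
    by_cases hp : ((p.1 : ℕ), (p.2 : ℕ)) ∈ cells n k
    · exact (hF.bijOn.mapsTo hp).2
    · simp [restrict, hF.eq_zero hp]
  · intro F hF G hG h
    exact hF.ext hG fun p hp => congrFun h (⟨p.1, by grind⟩, ⟨p.2, by grind⟩)

end Filling

def SameOrder (n k : ℕ) (F G : ℕ → ℕ → ℕ) : Prop :=
  ∀ p ∈ cells n k, ∀ q ∈ cells n k, (uncurry F p < uncurry F q ↔ uncurry G p < uncurry G q)

section SameOrder

variable {n j k i : ℕ} {F G : ℕ → ℕ → ℕ} {U : Set (ℕ → ℕ → ℕ)}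

lemma sameOrder_of_eqOn_comp {s : Set ℕ} {φ : ℕ → ℕ} (hφ : StrictMonoOn φ s)
    (hF : Set.MapsTo (uncurry F) (cells n k) s)
    (hG : Set.EqOn (uncurry G) (φ ∘ uncurry F) (cells n k)) :
    SameOrder n k G F := by
  intro p hp q hq
  rw [hG hp, hG hq]
  exact hφ.lt_iff_lt (hF hp) (hF hq)

lemma SameOrder.symm (h : SameOrder n k F G) : SameOrder n k G F :=
  fun p hp q hq => (h p hp q hq).symm

lemma SameOrder.lt_succ_of_lt_succ (h : SameOrder n k G F)
    (hF : ∀ i j, 1 ≤ i → i < k → 1 ≤ j → j ≤ n → F i j < F (i + 1) j) :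
    ∀ i j, 1 ≤ i → i < k → 1 ≤ j → j ≤ n → G i j < G (i + 1) j := fun i j hi1 hik hj1 hjn =>
  (h (i, j) ⟨⟨hi1, hik.le⟩, hj1, hjn⟩ (i + 1, j) ⟨⟨by omega, hik⟩, hj1, hjn⟩).2
    (hF i j hi1 hik hj1 hjn)

lemma SameOrder.matchAt_iff (h : SameOrder n k F G) {P : ℕ → ℕ → ℕ} (hi : 1 ≤ i)
    (hij : i + j ≤ n + 1) : MatchAt j k P F i ↔ MatchAt j k P G i := by
  have hcell : ∀ a b, 1 ≤ a → a ≤ k → 1 ≤ b → b ≤ j → (a, i - 1 + b) ∈ cells n k :=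
    fun a b ha1 ha2 hb1 hb2 => ⟨⟨ha1, ha2⟩, by omega, by omega⟩
  constructor <;> intro hm a b c d ha1 ha2 hb1 hb2 hc1 hc2 hd1 hd2
  · exact (h _ (hcell a b ha1 ha2 hb1 hb2) _ (hcell c d hc1 hc2 hd1 hd2)).symm.trans
      (hm a b c d ha1 ha2 hb1 hb2 hc1 hc2 hd1 hd2)
  · exact (h _ (hcell a b ha1 ha2 hb1 hb2) _ (hcell c d hc1 hc2 hd1 hd2)).trans
      (hm a b c d ha1 ha2 hb1 hb2 hc1 hc2 hd1 hd2)

lemma SameOrder.forall_not_hasUMatch_iff (h : SameOrder n k F G) :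
    (∀ i, i + j ≤ n + 1 → ¬ HasUMatch (n + 1) j k U F i) ↔ ∀ i, ¬ HasUMatch n j k U G i := by
  refine ⟨fun hF i ⟨hi, hij, P, hP, hm⟩ => hF i hij ⟨hi, by omega, P, hP, ?_⟩,
    fun hG i hij ⟨hi, _, P, hP, hm⟩ => hG i ⟨hi, hij, P, hP, ?_⟩⟩
  · exact (h.matchAt_iff hi hij).2 hm
  · exact (h.matchAt_iff hi hij).1 hm

end SameOrder

def lastColumn (n k : ℕ) (F : ℕ → ℕ → ℕ) : Finset ℕ :=
  (Finset.Icc 1 k).image (F · (n + 1))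

noncomputable def dropLastColumn (n k : ℕ) (F : ℕ → ℕ → ℕ) : ℕ → ℕ → ℕ := fun i j =>
  if (i, j) ∈ cells n k then (Finset.Icc 1 (k * (n + 1)) \ lastColumn n k F).rank (F i j) else 0

noncomputable def appendColumn (n k : ℕ) (L : Finset ℕ) (G : ℕ → ℕ → ℕ) : ℕ → ℕ → ℕ :=
  fun i j =>
    if (i, j) ∈ cells n k then (Finset.Icc 1 (k * (n + 1)) \ L).ofRank (G i j)
    else if (i, j) ∈ Set.Icc 1 k ×ˢ {n + 1} then L.ofRank i else 0

lemma card_Icc_sdiff {n k : ℕ} {L : Finset ℕ} (hL : L ⊆ Finset.Icc 1 (k * (n + 1)))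
    (hLk : #L = k) : #(Finset.Icc 1 (k * (n + 1)) \ L) = k * n := by
  rw [Finset.card_sdiff_of_subset hL, hLk, Nat.card_Icc, Nat.mul_succ]
  omega

section DropLastColumn

variable {n k : ℕ} {F : ℕ → ℕ → ℕ}

lemma coe_lastColumn :
    (lastColumn n k F : Set ℕ) = uncurry F '' Set.Icc 1 k ×ˢ {n + 1} := by
  ext v
  simp [lastColumn]

lemma IsFilling.lastColumn_subset (hF : IsFilling (n + 1) k F) :
    lastColumn n k F ⊆ Finset.Icc 1 (k * (n + 1)) := by
  rw [← Finset.coe_subset, coe_lastColumn, Finset.coe_Icc, ← hF.bijOn.image_eq,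
    cells_succ]
  exact Set.image_mono Set.subset_union_right

lemma IsFilling.card_lastColumn (hF : IsFilling (n + 1) k F) : #(lastColumn n k F) = k := by
  rw [lastColumn, Finset.card_image_of_injOn, Nat.card_Icc, Nat.add_sub_cancel]
  exact (hF.strictMonoOn_column ⟨by omega, le_rfl⟩).injOn.mono (by simp)

lemma IsFilling.bijOn_compl_lastColumn (hF : IsFilling (n + 1) k F) :
    Set.BijOn (uncurry F) (cells n k) ↑(Finset.Icc 1 (k * (n + 1)) \ lastColumn n k F) := by
  have hsub : Set.Icc 1 k ×ˢ {n + 1} ⊆ cells (n + 1) k :=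
    cells_succ n k ▸ Set.subset_union_right
  have h := (hF.bijOn.injOn.mono (s₁ := cells (n + 1) k \ Set.Icc 1 k ×ˢ {n + 1})
    Set.sdiff_subset).bijOn_image
  rwa [hF.bijOn.injOn.image_sdiff_subset hsub, cells_succ_sdiff, hF.bijOn.image_eq,
    ← coe_lastColumn, ← Finset.coe_Icc, ← Finset.coe_sdiff] at h

lemma IsFilling.rank_lastColumn (hF : IsFilling (n + 1) k F) {i : ℕ} (hi : i ∈ Set.Icc 1 k) :
    (lastColumn n k F).rank (F i (n + 1)) = i := by
  have hmem : Set.MapsTo (F · (n + 1)) (Set.Icc 1 k) (lastColumn n k F) := fun a ha =>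
    Finset.mem_image_of_mem _ (Finset.mem_Icc.2 ha)
  have hmono := Finset.strictMonoOn_rank.comp (hF.strictMonoOn_column ⟨by omega, le_rfl⟩) hmem
  refine hmono.eqOn_id_of_mapsTo (Set.finite_Icc 1 k) (fun a ha => ?_) hi
  simpa [hF.card_lastColumn] using Finset.rank_mem_Icc (hmem ha)

lemma dropLastColumn_of_mem_cells {i j : ℕ} (h : (i, j) ∈ cells n k) :
    dropLastColumn n k F i j = (Finset.Icc 1 (k * (n + 1)) \ lastColumn n k F).rank (F i j) :=
  if_pos h

lemma sameOrder_dropLastColumn (hF : IsFilling (n + 1) k F) :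
    SameOrder n k (dropLastColumn n k F) F :=
  sameOrder_of_eqOn_comp Finset.strictMonoOn_rank hF.bijOn_compl_lastColumn.mapsTo
    fun _ hp => if_pos hp

lemma IsFilling.dropLastColumn (hF : IsFilling (n + 1) k F) :
    IsFilling n k (dropLastColumn n k F) := by
  refine isFilling_of_bijOn (fun i j h => if_neg h) ?_
    ((sameOrder_dropLastColumn hF).lt_succ_of_lt_succ fun i j hi hik hj hjn =>
      hF.2.2 i j hi hik hj (by omega))
  rw [← card_Icc_sdiff hF.lastColumn_subset hF.card_lastColumn]
  exact (Finset.bijOn_rank.comp hF.bijOn_compl_lastColumn).congr fun _ hp => (if_pos hp).symm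

end DropLastColumn

section AppendColumn

variable {n k : ℕ} {L : Finset ℕ} {G : ℕ → ℕ → ℕ}

lemma appendColumn_of_mem_cells {i j : ℕ} (h : (i, j) ∈ cells n k) :
    appendColumn n k L G i j = (Finset.Icc 1 (k * (n + 1)) \ L).ofRank (G i j) :=
  if_pos h

lemma appendColumn_last {i : ℕ} (hi : i ∈ Set.Icc 1 k) :
    appendColumn n k L G i (n + 1) = L.ofRank i := by
  rw [appendColumn, if_neg fun h => by simp at h, if_pos ⟨hi, rfl⟩]

lemma sameOrder_appendColumn (hG : IsFilling n k G) (hL : L ⊆ Finset.Icc 1 (k * (n + 1)))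
    (hLk : #L = k) : SameOrder n k (appendColumn n k L G) G := by
  refine sameOrder_of_eqOn_comp Finset.strictMonoOn_ofRank ?_ fun _ hp => if_pos hp
  rw [card_Icc_sdiff hL hLk]
  exact hG.bijOn.mapsTo

lemma bijOn_appendColumn (hG : IsFilling n k G) (hL : L ⊆ Finset.Icc 1 (k * (n + 1)))
    (hLk : #L = k) :
    Set.BijOn (uncurry (appendColumn n k L G)) (cells (n + 1) k) (Set.Icc 1 (k * (n + 1))) := by
  have hcells : Set.BijOn (uncurry (appendColumn n k L G)) (cells n k)
      ↑(Finset.Icc 1 (k * (n + 1)) \ L) := by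
    refine (Finset.bijOn_ofRank.comp ?_).congr fun _ hp => (if_pos hp).symm
    rw [card_Icc_sdiff hL hLk]
    exact hG.bijOn
  have hlast : Set.BijOn (uncurry (appendColumn n k L G)) (Set.Icc 1 k ×ˢ {n + 1}) L := by
    have hfst : Set.BijOn Prod.fst (Set.Icc 1 k ×ˢ {n + 1}) (Set.Icc 1 #L) := by
      refine ⟨fun p hp => hLk ▸ hp.1, fun p hp q hq h => Prod.ext h ?_, fun i hi => ?_⟩
      · rw [hp.2, hq.2]
      · exact ⟨(i, n + 1), ⟨hLk ▸ hi, rfl⟩, rfl⟩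
    refine (Finset.bijOn_ofRank.comp hfst).congr ?_
    rintro ⟨i, _⟩ ⟨hi, rfl⟩
    exact (appendColumn_last hi).symm
  have h := cells_succ n k ▸
    hcells.union_of_disjoint hlast (Finset.disjoint_coe.2 Finset.sdiff_disjoint)
  rwa [← Finset.coe_union, Finset.sdiff_union_of_subset hL, Finset.coe_Icc] at h

lemma IsFilling.appendColumn (hG : IsFilling n k G) (hL : L ⊆ Finset.Icc 1 (k * (n + 1)))
    (hLk : #L = k) : IsFilling (n + 1) k (appendColumn n k L G) := by
  refine isFilling_of_bijOn (fun i j h => ?_) (bijOn_appendColumn hG hL hLk)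
    fun i j hi hik hj hjn => ?_
  · rw [cells_succ] at h
    exact (if_neg fun h' => h (Or.inl h')).trans (if_neg fun h' => h (Or.inr h'))
  · obtain hjn | rfl := hjn.lt_or_eq
    · exact (sameOrder_appendColumn hG hL hLk).lt_succ_of_lt_succ hG.2.2 i j hi hik hj
        (Nat.lt_succ_iff.1 hjn)
    · rw [appendColumn_last ⟨hi, hik.le⟩, appendColumn_last ⟨by omega, hik⟩]
      exact Finset.strictMonoOn_ofRank ⟨hi, by omega⟩ ⟨by omega, by omega⟩ (Nat.lt_succ_self i)

end AppendColumn

section Bijection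

variable {n k : ℕ}

lemma lastColumn_appendColumn {L : Finset ℕ} {G : ℕ → ℕ → ℕ} (hLk : #L = k) :
    lastColumn n k (appendColumn n k L G) = L := by
  have h := (Finset.bijOn_ofRank (t := L)).image_eq
  rw [hLk] at h
  rw [← Finset.coe_inj, lastColumn, Finset.coe_image, Finset.coe_Icc, ← h]
  exact Set.EqOn.image_eq fun i hi => appendColumn_last hi

lemma dropLastColumn_appendColumn {L : Finset ℕ} {G : ℕ → ℕ → ℕ} (hG : IsFilling n k G)
    (hL : L ⊆ Finset.Icc 1 (k * (n + 1))) (hLk : #L = k) :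
    dropLastColumn n k (appendColumn n k L G) = G := by
  refine (hG.appendColumn hL hLk).dropLastColumn.ext hG ?_
  rintro ⟨i, j⟩ hp
  rw [uncurry_apply_pair, uncurry_apply_pair, dropLastColumn_of_mem_cells hp,
    lastColumn_appendColumn hLk, appendColumn_of_mem_cells hp,
    Finset.rank_ofRank (card_Icc_sdiff hL hLk ▸ hG.bijOn.mapsTo hp)]

lemma appendColumn_dropLastColumn {F : ℕ → ℕ → ℕ} (hF : IsFilling (n + 1) k F) :
    appendColumn n k (lastColumn n k F) (dropLastColumn n k F) = F := by
  refine (hF.dropLastColumn.appendColumn hF.lastColumn_subset hF.card_lastColumn).ext hF ?_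
  rintro ⟨i, j⟩ hp
  rcases cells_succ n k ▸ hp with hp | ⟨hi, rfl⟩
  · rw [uncurry_apply_pair, appendColumn_of_mem_cells hp, dropLastColumn_of_mem_cells hp]
    exact Finset.ofRank_rank (hF.bijOn_compl_lastColumn.mapsTo hp)
  · calc appendColumn n k _ _ i (n + 1)
        = (lastColumn n k F).ofRank ((lastColumn n k F).rank (F i (n + 1))) := by
          rw [appendColumn_last hi, hF.rank_lastColumn hi]
      _ = F i (n + 1) := Finset.ofRank_rank (Finset.mem_image_of_mem _ (Finset.mem_Icc.2 hi))

end Bijection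

lemma Finset.card_subtype_subset_card_eq {α : Type*} (s : Finset α) (k : ℕ) :
    Nat.card {L : Finset α // L ⊆ s ∧ #L = k} = (#s).choose k := by
  rw [← Finset.card_powersetCard, ← Nat.card_eq_finsetCard]
  exact Nat.card_congr (Equiv.subtypeEquivRight fun _ => Finset.mem_powersetCard.symm)

lemma forall_ne_not_iff {M : ℕ → Prop} {m : ℕ} :
    (∀ i, i ≠ m → ¬ M i) ↔ (∀ i, ¬ M i) ∨ ∀ i, M i ↔ i = m := by
  refine ⟨fun h => ?_, ?_⟩
  · by_cases hm : M m
    · exact Or.inr fun i => ⟨fun hi => by_contra (h i · hi), fun hi => hi ▸ hm⟩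
    · exact Or.inl fun i hi => (eq_or_ne i m).elim (fun him => hm (him ▸ hi)) (h i · hi)
  · rintro (h | h) i hne hi
    exacts [h i hi, hne ((h i).1 hi)]

lemma card_isFilling_and_or {n k : ℕ} {A B : (ℕ → ℕ → ℕ) → Prop} (hAB : ∀ F, A F → ¬ B F) :
    Nat.card {F // IsFilling n k F ∧ (A F ∨ B F)} =
      Nat.card {F // IsFilling n k F ∧ A F} + Nat.card {F // IsFilling n k F ∧ B F} := by
  have hfin (C : (ℕ → ℕ → ℕ) → Prop) : {F | IsFilling n k F ∧ C F}.Finite :=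
    (finite_setOf_isFilling n k).subset fun _ hF => hF.1
  have hcard (C : (ℕ → ℕ → ℕ) → Prop) :
      Nat.card {F // IsFilling n k F ∧ C F} = {F | IsFilling n k F ∧ C F}.ncard :=
    Nat.card_coe_set_eq _
  rw [hcard (fun F => A F ∨ B F), hcard A, hcard B,
    ← Set.ncard_union_eq (Set.disjoint_left.2 fun F hA hB => hAB F hA.2 hB.2) (hfin A) (hfin B)]
  congr 1
  ext F
  simp only [Set.mem_ofPred_eq, Set.mem_union, and_or_left]

noncomputable def appendColumnEquiv (n j k : ℕ) (U : Set (ℕ → ℕ → ℕ)) :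
    {L : Finset ℕ // L ⊆ Finset.Icc 1 (k * (n + 1)) ∧ #L = k} ×
        {G : ℕ → ℕ → ℕ // IsFilling n k G ∧ ∀ i, ¬ HasUMatch n j k U G i} ≃
      {F : ℕ → ℕ → ℕ // IsFilling (n + 1) k F ∧
        ∀ i, i + j ≤ n + 1 → ¬ HasUMatch (n + 1) j k U F i} where
  toFun p := ⟨appendColumn n k p.1 p.2, p.2.2.1.appendColumn p.1.2.1 p.1.2.2,
    (sameOrder_appendColumn p.2.2.1 p.1.2.1 p.1.2.2).forall_not_hasUMatch_iff.2 p.2.2.2⟩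
  invFun F := (⟨lastColumn n k F, F.2.1.lastColumn_subset, F.2.1.card_lastColumn⟩,
    ⟨dropLastColumn n k F, F.2.1.dropLastColumn,
      (sameOrder_dropLastColumn F.2.1).symm.forall_not_hasUMatch_iff.1 F.2.2⟩)
  left_inv p := Prod.ext (Subtype.ext (lastColumn_appendColumn p.1.2.2))
    (Subtype.ext (dropLastColumn_appendColumn p.2.2.1 p.1.2.1 p.1.2.2))
  right_inv F := Subtype.ext (appendColumn_dropLastColumn F.2.1)

lemma card_noMatchInFirstColumns_eq_choose_mul (n j k : ℕ) (U : Set (ℕ → ℕ → ℕ)) :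
    Nat.card {F : ℕ → ℕ → ℕ // IsFilling (n + 1) k F ∧
        ∀ i, i + j ≤ n + 1 → ¬ HasUMatch (n + 1) j k U F i} =
      (k * (n + 1)).choose k * noMatchCountJ n j k U := by
  rw [← Nat.card_congr (appendColumnEquiv n j k U), Nat.card_prod, noMatchCountJ,
    Finset.card_subtype_subset_card_eq, Nat.card_Icc, Nat.add_sub_cancel]

lemma card_noMatchInFirstColumns_eq_add (n j k : ℕ) (U : Set (ℕ → ℕ → ℕ)) :
    Nat.card {F : ℕ → ℕ → ℕ // IsFilling (n + 1) k F ∧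
        ∀ i, i + j ≤ n + 1 → ¬ HasUMatch (n + 1) j k U F i} =
      noMatchCountJ (n + 1) j k U + endMatchCount (n + 1) j k U := by
  have hsplit (F : ℕ → ℕ → ℕ) : (∀ i, i + j ≤ n + 1 → ¬ HasUMatch (n + 1) j k U F i) ↔
      (∀ i, ¬ HasUMatch (n + 1) j k U F i) ∨
        ∀ i, HasUMatch (n + 1) j k U F i ↔ i = n + 1 + 1 - j := by
    rw [← forall_ne_not_iff]
    exact forall_congr' fun i =>
      ⟨fun h hne hm => h (by grind [HasUMatch]) hm, fun h hle => h (by omega)⟩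
  simp only [hsplit]
  exact card_isFilling_and_or fun F hno hend => hno _ ((hend _).2 rfl)

theorem stmt6_general (j k : ℕ) (U : Set (ℕ → ℕ → ℕ)) (n : ℕ) :
    Nat.choose (k * (n + 1)) k * noMatchCountJ n j k U =
      noMatchCountJ (n + 1) j k U + endMatchCount (n + 1) j k U := by
  rw [← card_noMatchInFirstColumns_eq_choose_mul, card_noMatchInFirstColumns_eq_add]

/-- `binom(k(n+1), k) · A_{n,k}^Υ = A_{n+1,k}^Υ + E_{n+1,k}^Υ` for all `n ≥ 0`. -/
theorem stmt6 (j k : ℕ) (hj : 1 ≤ j) (hk : 1 ≤ k) (U : Set (ℕ → ℕ → ℕ))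
    (hU : ∀ P ∈ U, IsFilling j k P) (n : ℕ) :
    Nat.choose (k * (n + 1)) k * noMatchCountJ n j k U =
      noMatchCountJ (n + 1) j k U + endMatchCount (n + 1) j k U :=
  stmt6_general j k U n
end

section
/- Let k ≥ 1 and let Υ ⊆ F_{2,k}. Then the following identity of formal power series in t with coefficients in ℚ[x] holds: (1 + Σ_{n≥1} (t^{2n}/(2kn)!) Σ_{F ∈ F^{(2),Υ}_{2n,k}} x^{Υ-mch^{(2)}(F)}) · (1 − Σ_{n≥1} (x−1)^{n−1} t^{2n} full_{2n}^Υ/(2kn)!) = 1. -/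
/-- `Υ-mch^{(2)}(F)`: the number of even positions `1 ≤ i ≤ n-1` at which `F` has an
`Υ`-match. -/
noncomputable def mch2Count (n k : ℕ) (U : Set (ℕ → ℕ → ℕ)) (F : ℕ → ℕ → ℕ) : ℕ :=
  Set.ncard {i | Even i ∧ 1 ≤ i ∧ i ≤ n - 1 ∧ ∃ P ∈ U, MatchAt 2 k P F i}

/-- `F^{(2),Υ}_{n,k}`: fillings with `Υ`-matches starting at every odd position
`1 ≤ i ≤ n-1`. -/
def OddFull (n k : ℕ) (U : Set (ℕ → ℕ → ℕ)) (F : ℕ → ℕ → ℕ) : Prop :=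
  IsFilling n k F ∧ ∀ i, Odd i → i ≤ n - 1 → ∃ P ∈ U, MatchAt 2 k P F i

/-!
Let `A_n = ∑_{F ∈ F^{(2),Υ}_{2n,k}} x ^ mch(F)`. Expanding `x = (x - 1) + 1` along the initial
run of matched even positions `2, 4, …, 2j - 2` of `F` gives
`x ^ mch(F) = ∑_j (x - 1) ^ (j - 1) x ^ (even matches after 2j)`, the `j`-th term being present
only when positions `1, …, 2j - 1` of `F` are all matched (position `2j` is free). Standardizing
the first `2j` columns and the remaining ones, such an `F` is the same as a choice of the `2kj`
values of its first block, a full filling of `2j` columns and an odd-full filling of `2(n - j)`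
columns; since a match only sees two adjacent columns, the even matches after `2j` are those of
the second block. Hence `A_n = ∑_{j=1}^n C(2kn, 2kj) full_{2j} (x - 1) ^ (j - 1) A_{n-j}`, which
after dividing by `(2kn)!` is the coefficient identity of the product of the two series.
-/

open Finset

theorem pow_card_filter_Ico_eq_sum {R : Type*} [CommRing R] (x : R) (p : ℕ → Prop)
    [DecidablePred p] {a n : ℕ} (han : a ≤ n) :
    x ^ #{i ∈ Ico a n | p i} =
      ∑ j ∈ Icc a n, if ∀ i ∈ Ico a j, p i then
        (x - 1) ^ (j - a) * x ^ #{i ∈ Ico (j + 1) n | p i} else 0 := by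
  induction han using Nat.decreasingInduction with
  | self => rw [Icc_self, sum_singleton, if_pos (by simp)]; simp
  | of_succ a ha ih =>
    have hterm : ∀ j ∈ Icc (a + 1) n,
        (if ∀ i ∈ Ico a j, p i then (x - 1) ^ (j - a) * x ^ #{i ∈ Ico (j + 1) n | p i} else 0) =
          if p a then (x - 1) * if ∀ i ∈ Ico (a + 1) j, p i then
            (x - 1) ^ (j - (a + 1)) * x ^ #{i ∈ Ico (j + 1) n | p i} else 0 else 0 := by
      intro j hj
      have haj : a < j := by simp at hj; omega
      simp only [← insert_Ico_add_one_left_eq_Ico haj, forall_mem_insert,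
        show j - a = j - (a + 1) + 1 by omega, pow_succ]
      by_cases hpa : p a <;> simp only [hpa, true_and, false_and, if_false, if_true]
      split_ifs <;> ring
    have hfirst : (if ∀ i ∈ Ico a a, p i then
        (x - 1) ^ (a - a) * x ^ #{i ∈ Ico (a + 1) n | p i} else 0) =
          x ^ #{i ∈ Ico (a + 1) n | p i} := by
      simp
    rw [← insert_Icc_add_one_left_eq_Icc ha.le, sum_insert (by simp), sum_congr rfl hterm, hfirst,
      ← insert_Ico_add_one_left_eq_Ico ha, filter_insert]
    by_cases hpa : p a
    · rw [if_pos hpa, card_insert_of_notMem (by simp)]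
      simp only [if_pos hpa, ← mul_sum, ← ih]
      ring
    · simp [hpa]

namespace PowerSeries
variable {R : Type*} [CommRing R]

theorem mk_ite_even_eq_expand (z : R) (e : ℕ → R) :
    (mk fun m => if m = 0 then z else if m % 2 = 0 then e m else 0) =
      expand 2 two_ne_zero (mk fun n => if n = 0 then z else e (2 * n)) := by
  ext m
  rw [coeff_expand, coeff_mk]
  by_cases h : m % 2 = 0
  · obtain ⟨n, rfl⟩ : ∃ n, m = 2 * n := ⟨m / 2, by omega⟩
    simp [coeff_mk]
  · rw [if_neg (by omega), if_neg h, if_neg (mt Nat.mod_eq_zero_of_dvd h)]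

theorem mk_mul_mk_one_sub_eq_one {a c : ℕ → R} (ha : a 0 = 1)
    (hrec : ∀ n, 1 ≤ n → a n = ∑ j ∈ Icc 1 n, c j * a (n - j)) :
    mk a * mk (fun n => if n = 0 then 1 else -c n) = 1 := by
  ext n
  rw [coeff_mul, coeff_one, ← Nat.sum_antidiagonal_swap]
  simp only [Prod.fst_swap, Prod.snd_swap, coeff_mk]
  rw [Nat.sum_antidiagonal_eq_sum_range_succ (fun j i => a i * if j = 0 then 1 else -c j),
    range_eq_Ico, sum_eq_sum_Ico_succ_bot n.succ_pos, Nat.succ_eq_add_one,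
    Ico_add_one_right_eq_Icc]
  rcases Nat.eq_zero_or_pos n with rfl | hn
  · simp [ha]
  · rw [if_neg hn.ne', if_pos rfl, mul_one, Nat.sub_zero, hrec n hn, ← sum_add_distrib]
    refine sum_eq_zero fun j hj => ?_
    rw [if_neg (by simp at hj; omega)]
    ring
end PowerSeries

namespace Filling

section Rank

variable (V : Finset ℕ)

def rank (v : ℕ) : ℕ := #{x ∈ V | x ≤ v}

theorem rank_mono : Monotone (rank V) := fun _ _ h =>
  card_le_card fun x hx => by
    simp only [mem_filter] at hx ⊢
    exact ⟨hx.1, hx.2.trans h⟩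

theorem rank_lt_rank {v w : ℕ} (hw : w ∈ V) (h : v < w) : rank V v < rank V w := by
  refine card_lt_card ⟨fun x hx => ?_, fun hsub => ?_⟩
  · simp only [mem_filter] at hx ⊢
    exact ⟨hx.1, hx.2.trans h.le⟩
  · have := (mem_filter.1 (hsub (mem_filter.2 ⟨hw, le_rfl⟩))).2
    omega

theorem rank_lt_rank_iff {v w : ℕ} (hw : w ∈ V) : rank V v < rank V w ↔ v < w :=
  ⟨fun h => lt_of_not_ge fun hwv => (rank_mono V hwv).not_gt h, rank_lt_rank V hw⟩

theorem rank_zero (h0 : 0 ∉ V) : rank V 0 = 0 :=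
  card_eq_zero.2 <| filter_eq_empty_iff.2 fun _ hx hx0 => h0 (Nat.le_zero.1 hx0 ▸ hx)

theorem rank_bijOn : Set.BijOn (rank V) V (Set.Icc 1 #V) := by
  have hmaps : Set.MapsTo (rank V) V (Set.Icc 1 #V) := fun v hv =>
    ⟨card_pos.2 ⟨v, mem_filter.2 ⟨hv, le_rfl⟩⟩, card_filter_le _ _⟩
  have hinj : Set.InjOn (rank V) V :=
    StrictMonoOn.injOn fun _ _ w hw h => rank_lt_rank V hw h
  refine ⟨hmaps, hinj, ?_⟩
  rw [← coe_Icc]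
  exact surjOn_of_injOn_of_card_le _ (by rwa [coe_Icc]) hinj (by simp)

/-- The junk value `0` gives `unrank V 0 = 0`, which keeps relabelled fillings `0` outside their
rectangle. -/
noncomputable def unrank (r : ℕ) : ℕ :=
  if h : ∃ v ∈ V, rank V v = r then h.choose else 0

theorem unrank_rank {v : ℕ} (hv : v ∈ V) : unrank V (rank V v) = v := by
  have h : ∃ w ∈ V, rank V w = rank V v := ⟨v, hv, rfl⟩
  rw [unrank, dif_pos h]
  exact (rank_bijOn V).injOn h.choose_spec.1 hv h.choose_spec.2

theorem unrank_zero : unrank V 0 = 0 := by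
  rw [unrank, dif_neg]
  rintro ⟨v, hv, h⟩
  exact (Nat.one_le_iff_ne_zero.1 ((rank_bijOn V).mapsTo hv).1) h

theorem unrank_rank_of_mem_or_eq_zero (h0 : 0 ∉ V) {v : ℕ} (hv : v ∈ V ∨ v = 0) :
    unrank V (rank V v) = v := by
  rcases hv with hv | rfl
  · exact unrank_rank V hv
  · rw [rank_zero V h0, unrank_zero]

theorem unrank_spec {r : ℕ} (hr : r ∈ Set.Icc 1 #V) : unrank V r ∈ V ∧ rank V (unrank V r) = r := by
  have h : ∃ v ∈ V, rank V v = r := (rank_bijOn V).surjOn hr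
  rw [unrank, dif_pos h]
  exact h.choose_spec

theorem rank_unrank (h0 : 0 ∉ V) {r : ℕ} (hr : r ≤ #V) : rank V (unrank V r) = r := by
  rcases Nat.eq_zero_or_pos r with rfl | hr0
  · rw [unrank_zero, rank_zero V h0]
  · exact (unrank_spec V ⟨hr0, hr⟩).2

theorem unrank_bijOn : Set.BijOn (unrank V) (Set.Icc 1 #V) V :=
  (rank_bijOn V).symm ⟨fun _ hr => (unrank_spec V hr).2, fun _ hv => unrank_rank V hv⟩

theorem unrank_lt_unrank_iff (h0 : 0 ∉ V) {r s : ℕ} (hr : r ≤ #V) (hs : s ≤ #V) :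
    unrank V r < unrank V s ↔ r < s := by
  rcases Nat.eq_zero_or_pos s with rfl | hs0
  · simp [unrank_zero]
  have hmem := (unrank_spec V ⟨hs0, hs⟩).1
  rw [← rank_lt_rank_iff V hmem, rank_unrank V h0 hr, rank_unrank V h0 hs]

end Rank

def grid (k d : ℕ) : Finset (ℕ × ℕ) := Finset.Icc 1 k ×ˢ Finset.Icc 1 d

@[simp]
theorem coe_grid (k d : ℕ) : (grid k d : Set (ℕ × ℕ)) = Set.Icc 1 k ×ˢ Set.Icc 1 d := by
  simp [grid]

theorem mem_grid {k d : ℕ} {p : ℕ × ℕ} :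
    p ∈ grid k d ↔ (1 ≤ p.1 ∧ p.1 ≤ k) ∧ 1 ≤ p.2 ∧ p.2 ≤ d := by
  simp [grid]

def block (c : ℕ) (F : ℕ → ℕ → ℕ) (p : ℕ × ℕ) : ℕ := F p.1 (p.2 + c)

def blockValues (k c d : ℕ) (F : ℕ → ℕ → ℕ) : Finset ℕ := (grid k d).image (block c F)

noncomputable def standardize (k c d : ℕ) (F : ℕ → ℕ → ℕ) : ℕ → ℕ → ℕ :=
  fun i j => if 1 ≤ j ∧ j ≤ d then rank (blockValues k c d F) (F i (j + c)) else 0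

end Filling

namespace IsFilling

open Filling

variable {m k c d : ℕ} {F : ℕ → ℕ → ℕ}

theorem apply_eq_zero (hF : IsFilling m k F) {i j : ℕ} (h : ¬(1 ≤ i ∧ i ≤ k ∧ 1 ≤ j ∧ j ≤ m)) :
    F i j = 0 :=
  by_contra fun h0 => h (hF.1 i j h0)

theorem apply_mem_Icc (hF : IsFilling m k F) {i j : ℕ} (hi : 1 ≤ i) (hik : i ≤ k) (hj : 1 ≤ j)
    (hjm : j ≤ m) : F i j ∈ Finset.Icc 1 (k * m) := by
  simpa using hF.2.1.mapsTo (show (i, j) ∈ Set.Icc 1 k ×ˢ Set.Icc 1 m from ⟨⟨hi, hik⟩, hj, hjm⟩)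

theorem apply_le (hF : IsFilling m k F) (i j : ℕ) : F i j ≤ k * m := by
  by_cases h : 1 ≤ i ∧ i ≤ k ∧ 1 ≤ j ∧ j ≤ m
  · exact (Finset.mem_Icc.1 (hF.apply_mem_Icc h.1 h.2.1 h.2.2.1 h.2.2.2)).2
  · rw [hF.apply_eq_zero h]
    exact Nat.zero_le _

theorem injOn_block (hF : IsFilling m k F) (h : c + d ≤ m) :
    Set.InjOn (block c F) (grid k d) := by
  rintro ⟨i, j⟩ hij ⟨i', j'⟩ hij' heq
  simp only [coe_grid, Set.mem_prod, Set.mem_Icc] at hij hij'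
  have := hF.2.1.injOn (show (i, j + c) ∈ Set.Icc 1 k ×ˢ Set.Icc 1 m by simp; omega)
    (show (i', j' + c) ∈ Set.Icc 1 k ×ˢ Set.Icc 1 m by simp; omega) heq
  simp only [Prod.mk.injEq] at this ⊢
  omega

theorem bijOn_block (hF : IsFilling m k F) (h : c + d ≤ m) :
    Set.BijOn (block c F) (grid k d) (blockValues k c d F) := by
  rw [blockValues, coe_image]
  exact (hF.injOn_block h).bijOn_image

theorem card_blockValues (hF : IsFilling m k F) (h : c + d ≤ m) :
    #(blockValues k c d F) = k * d := by
  rw [blockValues, card_image_of_injOn (hF.injOn_block h), grid, card_product, Nat.card_Icc,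
    Nat.card_Icc, Nat.add_sub_cancel, Nat.add_sub_cancel]

theorem blockValues_subset (hF : IsFilling m k F) (h : c + d ≤ m) :
    blockValues k c d F ⊆ Icc 1 (k * m) := by
  intro v hv
  obtain ⟨⟨i, j⟩, hij, rfl⟩ := mem_image.1 hv
  rw [mem_grid] at hij
  exact hF.apply_mem_Icc hij.1.1 hij.1.2 (by omega) (by omega)

theorem zero_notMem_blockValues (hF : IsFilling m k F) (h : c + d ≤ m) :
    0 ∉ blockValues k c d F := fun h0 => by
  simpa using hF.blockValues_subset h h0

theorem mem_blockValues_or_eq_zero (hF : IsFilling m k F) {i j : ℕ} (hj : 1 ≤ j) (hjd : j ≤ d) :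
    F i (j + c) ∈ blockValues k c d F ∨ F i (j + c) = 0 := by
  by_cases hi : 1 ≤ i ∧ i ≤ k
  · exact Or.inl (mem_image.2 ⟨(i, j), mem_grid.2 ⟨hi, hj, hjd⟩, rfl⟩)
  · exact Or.inr (hF.apply_eq_zero (by omega))

theorem blockValues_right_eq_sdiff (hF : IsFilling m k F) (hc : c ≤ m) :
    blockValues k c (m - c) F = Icc 1 (k * m) \ blockValues k 0 c F := by
  ext v
  rw [mem_sdiff]
  constructor
  · intro hv
    refine ⟨hF.blockValues_subset (by omega) hv, fun hv' => ?_⟩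
    obtain ⟨⟨i, j⟩, hij, rfl⟩ := mem_image.1 hv
    obtain ⟨⟨i', j'⟩, hij', heq⟩ := mem_image.1 hv'
    rw [mem_grid] at hij hij'
    have := hF.2.1.injOn (show (i', j' + 0) ∈ Set.Icc 1 k ×ˢ Set.Icc 1 m by simp; omega)
      (show (i, j + c) ∈ Set.Icc 1 k ×ˢ Set.Icc 1 m by simp; omega) heq
    simp only [Prod.mk.injEq] at this
    omega
  · rintro ⟨hv, hv'⟩
    obtain ⟨⟨i, j⟩, hij, rfl⟩ := hF.2.1.surjOn (by simpa using hv)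
    simp only [Set.mem_prod, Set.mem_Icc] at hij
    have hcj : c < j := by
      by_contra hjc
      exact hv' (mem_image.2 ⟨(i, j), mem_grid.2 ⟨hij.1, hij.2.1, by omega⟩, rfl⟩)
    refine mem_image.2 ⟨(i, j - c), mem_grid.2 ⟨hij.1, by omega, by omega⟩, ?_⟩
    simp [block, Nat.sub_add_cancel hcj.le]

end IsFilling

namespace Filling

theorem setOf_isFilling_finite (m k : ℕ) : {F | IsFilling m k F}.Finite := by
  classical
  refine (Set.finite_range fun (g : grid k m → Fin (k * m + 1)) (i j : ℕ) =>
    if h : (i, j) ∈ grid k m then (g ⟨(i, j), h⟩ : ℕ) else 0).subset fun F hF => ?_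
  refine ⟨fun p => ⟨F p.1.1 p.1.2, Nat.lt_succ_of_le (hF.apply_le _ _)⟩, funext₂ fun i j => ?_⟩
  by_cases h : (i, j) ∈ grid k m
  · simp [h]
  · simp only [dif_neg h]
    rw [hF.apply_eq_zero fun hc => h (mem_grid.2 ⟨⟨hc.1, hc.2.1⟩, hc.2.2⟩)]

noncomputable def fillings (m k : ℕ) : Finset (ℕ → ℕ → ℕ) := (setOf_isFilling_finite m k).toFinset

@[simp]
theorem mem_fillings {m k : ℕ} {F : ℕ → ℕ → ℕ} : F ∈ fillings m k ↔ IsFilling m k F :=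
  Set.Finite.mem_toFinset _

theorem fillings_zero (k : ℕ) : fillings 0 k = {0} := by
  ext F
  rw [mem_fillings, mem_singleton]
  refine ⟨fun hF => funext₂ fun i j => hF.apply_eq_zero (by omega), ?_⟩
  rintro rfl
  refine ⟨fun _ _ h => absurd rfl h, ?_, fun _ _ _ _ _ h => by omega⟩
  rw [Set.Icc_eq_empty (by omega : ¬(1 : ℕ) ≤ 0), Set.prod_empty, Nat.mul_zero,
    Set.Icc_eq_empty (by omega : ¬(1 : ℕ) ≤ 0)]
  exact Set.bijOn_empty _

theorem isFilling_standardize {m k c d : ℕ} {F : ℕ → ℕ → ℕ} (hF : IsFilling m k F) (h : c + d ≤ m) :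
    IsFilling d k (standardize k c d F) := by
  have h0 := hF.zero_notMem_blockValues h
  refine ⟨fun i j hij => ?_, ?_, fun i j hi hik hj hjd => ?_⟩
  · unfold standardize at hij
    split_ifs at hij with hj
    · have := hF.1 _ _ fun h' => hij (by rw [h', rank_zero _ h0])
      omega
    · exact absurd rfl hij
  · have hbij := (rank_bijOn _).comp (hF.bijOn_block h)
    rw [hF.card_blockValues h, coe_grid] at hbij
    refine hbij.congr fun p hp => ?_
    simp only [Set.mem_prod, Set.mem_Icc] at hp
    simp [standardize, block, hp.2]
  · simp only [standardize, if_pos (⟨hj, hjd⟩ : 1 ≤ j ∧ j ≤ d)]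
    exact rank_lt_rank _ (mem_image.2 ⟨(i + 1, j), mem_grid.2 ⟨⟨by omega, hik⟩, hj, hjd⟩, rfl⟩)
      (hF.2.2 i (j + c) hi hik (by omega) (by omega))

noncomputable def glue (k m c : ℕ) (V : Finset ℕ) (G H : ℕ → ℕ → ℕ) : ℕ → ℕ → ℕ :=
  fun i j => if j ≤ c then unrank V (G i j) else unrank (Icc 1 (k * m) \ V) (H i (j - c))

section Glue

variable {k m c : ℕ} {V : Finset ℕ} {G H : ℕ → ℕ → ℕ}

theorem card_Icc_sdiff (hV : V ⊆ Icc 1 (k * m)) (hVc : #V = k * c) :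
    #(Icc 1 (k * m) \ V) = k * (m - c) := by
  rw [card_sdiff_of_subset hV, Nat.card_Icc, hVc, Nat.mul_sub]
  omega

theorem bijOn_block_glue_left (hVc : #V = k * c) (hG : IsFilling c k G) :
    Set.BijOn (block 0 (glue k m c V G H)) (grid k c) V := by
  have hG' : Set.BijOn (fun p : ℕ × ℕ => G p.1 p.2) (grid k c) (Set.Icc 1 #V) := by
    rw [hVc, coe_grid]
    exact hG.2.1
  refine ((unrank_bijOn V).comp hG').congr fun p hp => ?_
  simp only [coe_grid, Set.mem_prod, Set.mem_Icc] at hp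
  simp [block, glue, hp.2.2]

theorem bijOn_block_glue_right (hV : V ⊆ Icc 1 (k * m)) (hVc : #V = k * c)
    (hH : IsFilling (m - c) k H) :
    Set.BijOn (block c (glue k m c V G H)) (grid k (m - c))
      ((Icc 1 (k * m) \ V : Finset ℕ) : Set ℕ) := by
  have hH' : Set.BijOn (fun p : ℕ × ℕ => H p.1 p.2) (grid k (m - c))
      (Set.Icc 1 #(Icc 1 (k * m) \ V)) := by
    rw [card_Icc_sdiff hV hVc, coe_grid]
    exact hH.2.1
  refine ((unrank_bijOn _).comp hH').congr fun p hp => ?_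
  simp only [coe_grid, Set.mem_prod, Set.mem_Icc] at hp
  simp [block, glue, show ¬p.2 + c ≤ c by omega]

theorem bijOn_glue (hc : c ≤ m) (hV : V ⊆ Icc 1 (k * m)) (hVc : #V = k * c)
    (hG : IsFilling c k G) (hH : IsFilling (m - c) k H) :
    Set.BijOn (fun p : ℕ × ℕ => glue k m c V G H p.1 p.2) (grid k m) (Icc 1 (k * m)) := by
  have hleft := bijOn_block_glue_left (m := m) (H := H) hVc hG
  have hright := bijOn_block_glue_right (G := G) hV hVc hH
  have hmaps : Set.MapsTo (fun p : ℕ × ℕ => glue k m c V G H p.1 p.2) (grid k m)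
      (Icc 1 (k * m)) := by
    rintro ⟨i, j⟩ hij
    rw [mem_coe, mem_grid] at hij
    by_cases hjc : j ≤ c
    · exact hV (hleft.mapsTo (mem_grid.2 ⟨hij.1, hij.2.1, hjc⟩))
    · have := hright.mapsTo
        (show (i, j - c) ∈ grid k (m - c) from mem_grid.2 ⟨hij.1, by omega, by omega⟩)
      rw [mem_coe, block, Nat.sub_add_cancel (by omega)] at this
      exact (mem_sdiff.1 this).1
  have hsurj : Set.SurjOn (fun p : ℕ × ℕ => glue k m c V G H p.1 p.2) (grid k m)
      (Icc 1 (k * m)) := by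
    intro v hv
    by_cases hvV : v ∈ V
    · obtain ⟨⟨i, j⟩, hij, rfl⟩ := hleft.surjOn hvV
      rw [mem_coe, mem_grid] at hij
      exact ⟨(i, j), mem_grid.2 ⟨hij.1, hij.2.1, by omega⟩, rfl⟩
    · obtain ⟨⟨i, j⟩, hij, rfl⟩ := hright.surjOn (mem_coe.2 (mem_sdiff.2 ⟨hv, hvV⟩))
      rw [mem_coe, mem_grid] at hij
      exact ⟨(i, j + c), mem_grid.2 ⟨hij.1, by omega, by omega⟩, rfl⟩
  exact ⟨hmaps, injOn_of_surjOn_of_card_le _ hmaps hsurj (by simp [grid]), hsurj⟩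

theorem isFilling_glue (hc : c ≤ m) (hV : V ⊆ Icc 1 (k * m)) (hVc : #V = k * c)
    (hG : IsFilling c k G) (hH : IsFilling (m - c) k H) : IsFilling m k (glue k m c V G H) := by
  have h0 : 0 ∉ V := fun h => by simpa using hV h
  refine ⟨fun i j hij => ?_, ?_, fun i j hi hik hj hjm => ?_⟩
  · unfold glue at hij
    split_ifs at hij with hjc
    · have := hG.1 i j fun h => hij (by rw [h, unrank_zero])
      omega
    · have := hH.1 i (j - c) fun h => hij (by rw [h, unrank_zero])
      omega
  · simpa using bijOn_glue hc hV hVc hG hH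
  · unfold glue
    split_ifs with hjc
    · rw [unrank_lt_unrank_iff V h0 (hVc ▸ hG.apply_le _ _) (hVc ▸ hG.apply_le _ _)]
      exact hG.2.2 i j hi hik hj hjc
    · rw [unrank_lt_unrank_iff _ (by simp) (card_Icc_sdiff hV hVc ▸ hH.apply_le _ _)
        (card_Icc_sdiff hV hVc ▸ hH.apply_le _ _)]
      exact hH.2.2 i (j - c) hi hik (by omega) (by omega)

theorem blockValues_glue_left (hVc : #V = k * c) (hG : IsFilling c k G) :
    blockValues k 0 c (glue k m c V G H) = V :=
  coe_injective <| by
    rw [blockValues, coe_image]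
    exact (bijOn_block_glue_left hVc hG).image_eq

theorem blockValues_glue_right (hV : V ⊆ Icc 1 (k * m)) (hVc : #V = k * c)
    (hH : IsFilling (m - c) k H) :
    blockValues k c (m - c) (glue k m c V G H) = Icc 1 (k * m) \ V :=
  coe_injective <| by
    rw [blockValues, coe_image]
    exact (bijOn_block_glue_right hV hVc hH).image_eq

theorem standardize_glue_left (hV : V ⊆ Icc 1 (k * m)) (hVc : #V = k * c)
    (hG : IsFilling c k G) : standardize k 0 c (glue k m c V G H) = G := by
  funext i j
  rw [standardize, blockValues_glue_left hVc hG]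
  split_ifs with hj
  · rw [glue, if_pos (by omega)]
    exact rank_unrank V (fun h => by simpa using hV h) (hVc ▸ hG.apply_le i j)
  · exact (hG.apply_eq_zero (by omega)).symm

theorem standardize_glue_right (hV : V ⊆ Icc 1 (k * m)) (hVc : #V = k * c)
    (hH : IsFilling (m - c) k H) : standardize k c (m - c) (glue k m c V G H) = H := by
  funext i j
  rw [standardize, blockValues_glue_right hV hVc hH]
  split_ifs with hj
  · rw [glue, if_neg (by omega), Nat.add_sub_cancel]
    exact rank_unrank _ (by simp) (card_Icc_sdiff hV hVc ▸ hH.apply_le i j)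
  · exact (hH.apply_eq_zero (by omega)).symm

theorem glue_standardize {F : ℕ → ℕ → ℕ} (hF : IsFilling m k F) (hc : c ≤ m) :
    glue k m c (blockValues k 0 c F) (standardize k 0 c F) (standardize k c (m - c) F) = F := by
  funext i j
  simp only [glue, standardize, ← hF.blockValues_right_eq_sdiff hc]
  by_cases hjc : j ≤ c
  · rw [if_pos hjc]
    split_ifs with hj
    · exact unrank_rank_of_mem_or_eq_zero _ (hF.zero_notMem_blockValues (by omega))
        (hF.mem_blockValues_or_eq_zero (c := 0) hj.1 hj.2)
    · rw [unrank_zero, hF.apply_eq_zero (by omega)]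
  · rw [if_neg hjc]
    split_ifs with hj
    · have hcell := hF.mem_blockValues_or_eq_zero (c := c) (d := m - c) (i := i) (j := j - c)
        (by omega) (by omega)
      rw [Nat.sub_add_cancel (by omega)] at hcell ⊢
      exact unrank_rank_of_mem_or_eq_zero _ (hF.zero_notMem_blockValues (by omega)) hcell
    · rw [unrank_zero, hF.apply_eq_zero (by omega)]

end Glue

theorem sum_fillings_eq_sum_glue {M : Type*} [AddCommMonoid M] {m k c : ℕ} (hc : c ≤ m)
    (f : (ℕ → ℕ → ℕ) → M) :
    ∑ F ∈ fillings m k, f F =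
      ∑ V ∈ powersetCard (k * c) (Icc 1 (k * m)), ∑ G ∈ fillings c k, ∑ H ∈ fillings (m - c) k,
        f (glue k m c V G H) := by
  simp_rw [← sum_product']
  refine sum_nbij' (fun F => (blockValues k 0 c F, standardize k 0 c F, standardize k c (m - c) F))
    (fun t => glue k m c t.1 t.2.1 t.2.2) ?_ ?_ ?_ ?_ ?_
  · intro F hF
    simp only [mem_fillings, mem_product, mem_powersetCard] at hF ⊢
    exact ⟨⟨hF.blockValues_subset (by omega), hF.card_blockValues (by omega)⟩,
      isFilling_standardize hF (by omega), isFilling_standardize hF (by omega)⟩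
  · rintro ⟨V, G, H⟩ ht
    simp only [mem_fillings, mem_product, mem_powersetCard] at ht ⊢
    exact isFilling_glue hc ht.1.1 ht.1.2 ht.2.1 ht.2.2
  · intro F hF
    exact glue_standardize (mem_fillings.1 hF) hc
  · rintro ⟨V, G, H⟩ ht
    simp only [mem_fillings, mem_product, mem_powersetCard] at ht
    simp only [blockValues_glue_left ht.1.2 ht.2.1, standardize_glue_left ht.1.1 ht.1.2 ht.2.1,
      standardize_glue_right ht.1.1 ht.1.2 ht.2.2]
  · intro F hF
    simp only [glue_standardize (mem_fillings.1 hF) hc]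

def HasMatch (k : ℕ) (U : Set (ℕ → ℕ → ℕ)) (F : ℕ → ℕ → ℕ) (i : ℕ) : Prop :=
  ∃ P ∈ U, MatchAt 2 k P F i

theorem hasMatch_congr {k : ℕ} {U : Set (ℕ → ℕ → ℕ)} {F F' : ℕ → ℕ → ℕ} {i i' : ℕ}
    (h : ∀ a b c d, 1 ≤ b → b ≤ 2 → 1 ≤ d → d ≤ 2 →
      (F a (i - 1 + b) < F c (i - 1 + d) ↔ F' a (i' - 1 + b) < F' c (i' - 1 + d))) :
    HasMatch k U F i ↔ HasMatch k U F' i' :=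
  exists_congr fun _ => and_congr_right fun _ =>
    ⟨fun hm a b c d ha hak hb hb2 hc hck hd hd2 =>
      (h a b c d hb hb2 hd hd2).symm.trans (hm a b c d ha hak hb hb2 hc hck hd hd2),
    fun hm a b c d ha hak hb hb2 hc hck hd hd2 =>
      (h a b c d hb hb2 hd hd2).trans (hm a b c d ha hak hb hb2 hc hck hd hd2)⟩

section Matches

variable {k m c : ℕ} {U : Set (ℕ → ℕ → ℕ)} {V : Finset ℕ} {G H : ℕ → ℕ → ℕ}

theorem hasMatch_glue_left (hV : V ⊆ Icc 1 (k * m)) (hVc : #V = k * c) (hG : IsFilling c k G)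
    {i : ℕ} (hi₀ : 1 ≤ i) (hi : i + 1 ≤ c) :
    HasMatch k U (glue k m c V G H) i ↔ HasMatch k U G i := by
  refine hasMatch_congr fun a b a' b' _ hb _ hb' => ?_
  simp only [glue, if_pos (show i - 1 + b ≤ c by omega), if_pos (show i - 1 + b' ≤ c by omega)]
  exact unrank_lt_unrank_iff V (fun h => by simpa using hV h) (hVc ▸ hG.apply_le _ _)
    (hVc ▸ hG.apply_le _ _)

theorem hasMatch_glue_right (hV : V ⊆ Icc 1 (k * m)) (hVc : #V = k * c)
    (hH : IsFilling (m - c) k H) {i : ℕ} (hi : c + 1 ≤ i) :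
    HasMatch k U (glue k m c V G H) i ↔ HasMatch k U H (i - c) := by
  refine hasMatch_congr fun a b a' b' hb _ hb' _ => ?_
  simp only [glue, if_neg (show ¬i - 1 + b ≤ c by omega), if_neg (show ¬i - 1 + b' ≤ c by omega),
    show i - 1 + b - c = i - c - 1 + b by omega, show i - 1 + b' - c = i - c - 1 + b' by omega]
  exact unrank_lt_unrank_iff _ (by simp) (card_Icc_sdiff hV hVc ▸ hH.apply_le _ _)
    (card_Icc_sdiff hV hVc ▸ hH.apply_le _ _)

end Matches

open scoped Classical

theorem mch2Count_eq_card (n k : ℕ) (U : Set (ℕ → ℕ → ℕ)) (F : ℕ → ℕ → ℕ) :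
    mch2Count (2 * n) k U F = #{i ∈ Ico 1 n | HasMatch k U F (2 * i)} := by
  rw [mch2Count, ← card_image_of_injective _ (mul_right_injective₀ two_ne_zero),
    ← Set.ncard_coe_finset]
  congr 1
  ext i
  simp only [Set.mem_ofPred_eq, coe_image, Set.mem_image, mem_coe, mem_filter, mem_Ico]
  constructor
  · rintro ⟨⟨r, rfl⟩, h1, h2, hm⟩
    exact ⟨r, ⟨⟨by omega, by omega⟩, by rwa [two_mul]⟩, two_mul r⟩
  · rintro ⟨r, ⟨⟨h1, h2⟩, hm⟩, rfl⟩
    exact ⟨⟨r, two_mul r⟩, by omega, by omega, hm⟩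

theorem fullCount_eq_card (m k : ℕ) (U : Set (ℕ → ℕ → ℕ)) :
    fullCount m k U = #{F ∈ fillings m k | ∀ i, 1 ≤ i → i ≤ m - 1 → HasMatch k U F i} := by
  rw [fullCount, ← Set.ncard_coe_finset, ← Nat.card_coe_set_eq]
  exact Nat.card_congr <| Equiv.subtypeEquivRight fun F => by
    simp only [mem_coe, mem_filter, mem_fillings]
    rfl

section Weight

variable {R : Type*} [CommRing R] (x : R) {k : ℕ} {U : Set (ℕ → ℕ → ℕ)}

noncomputable def oddFullWeight (m k : ℕ) (U : Set (ℕ → ℕ → ℕ)) : R :=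
  ∑ F ∈ fillings m k, if OddFull m k U F then x ^ mch2Count m k U F else 0

theorem finsum_eq_oddFullWeight (m : ℕ) :
    ∑ᶠ F ∈ {F | OddFull m k U F}, x ^ mch2Count m k U F = oddFullWeight x m k U := by
  rw [finsum_mem_eq_finite_toFinset_sum _ ((setOf_isFilling_finite m k).subset fun _ hF => hF.1),
    oddFullWeight, ← sum_filter]
  congr 1
  ext F
  simp only [Set.Finite.mem_toFinset, Set.mem_ofPred_eq, mem_filter, mem_fillings]
  exact ⟨fun hF => ⟨hF.1, hF⟩, And.right⟩

theorem oddFullWeight_zero : oddFullWeight x 0 k U = 1 := by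
  have h0 : IsFilling 0 k 0 := mem_fillings.1 (fillings_zero k ▸ mem_singleton_self 0)
  rw [oddFullWeight, fillings_zero, sum_singleton,
    if_pos ⟨h0, fun i hi hle => absurd hi.pos (by omega)⟩]
  simpa using congrArg (x ^ ·) (mch2Count_eq_card 0 k U 0)

variable {n j : ℕ} {V : Finset ℕ} {G H : ℕ → ℕ → ℕ}

theorem oddFull_glue_iff (hjn : j ≤ n) (hV : V ⊆ Icc 1 (k * (2 * n)))
    (hVc : #V = k * (2 * j)) (hG : IsFilling (2 * j) k G) (hH : IsFilling (2 * (n - j)) k H) :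
    (OddFull (2 * n) k U (glue k (2 * n) (2 * j) V G H) ∧
        ∀ i ∈ Ico 1 j, HasMatch k U (glue k (2 * n) (2 * j) V G H) (2 * i)) ↔
      (∀ i, 1 ≤ i → i ≤ 2 * j - 1 → HasMatch k U G i) ∧ OddFull (2 * (n - j)) k U H := by
  have hH' : IsFilling (2 * n - 2 * j) k H := by rwa [show 2 * n - 2 * j = 2 * (n - j) by omega]
  have hleft : ∀ i, 1 ≤ i → i + 1 ≤ 2 * j →
      (HasMatch k U (glue k (2 * n) (2 * j) V G H) i ↔ HasMatch k U G i) :=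
    fun i hi₀ hi => hasMatch_glue_left hV hVc hG hi₀ hi
  have hright : ∀ i, 2 * j + 1 ≤ i →
      (HasMatch k U (glue k (2 * n) (2 * j) V G H) i ↔ HasMatch k U H (i - 2 * j)) :=
    fun i hi => hasMatch_glue_right hV hVc hH' hi
  simp only [OddFull, isFilling_glue (by omega) hV hVc hG hH', hH, true_and, Nat.odd_iff,
    mem_Ico, and_imp]
  constructor
  · rintro ⟨hodd, heven⟩
    refine ⟨fun i h1 h2 => (hleft i h1 (by omega)).1 ?_, fun i hi h2 => ?_⟩
    · rcases Nat.mod_two_eq_zero_or_one i with hi | hi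
      · simpa [show 2 * (i / 2) = i by omega] using heven (i / 2) (by omega) (by omega)
      · exact hodd i hi (by omega)
    · have := (hright (i + 2 * j) (by omega)).1 (hodd (i + 2 * j) (by omega) (by omega))
      rwa [Nat.add_sub_cancel] at this
  · rintro ⟨hfull, hodd⟩
    refine ⟨fun i hi h2 => ?_, fun i h1 h2 => (hleft _ (by omega) (by omega)).2
      (hfull _ (by omega) (by omega))⟩
    rcases Nat.lt_or_gt_of_ne (show i ≠ 2 * j by omega) with hlt | hgt
    · exact (hleft i (by omega) (by omega)).2 (hfull i (by omega) (by omega))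
    · exact (hright i hgt).2 (hodd (i - 2 * j) (by omega) (by omega))

theorem card_filter_hasMatch_glue (hjn : j ≤ n) (hV : V ⊆ Icc 1 (k * (2 * n)))
    (hVc : #V = k * (2 * j)) (hH : IsFilling (2 * (n - j)) k H) :
    #{i ∈ Ico (j + 1) n | HasMatch k U (glue k (2 * n) (2 * j) V G H) (2 * i)} =
      mch2Count (2 * (n - j)) k U H := by
  have hH' : IsFilling (2 * n - 2 * j) k H := by rwa [show 2 * n - 2 * j = 2 * (n - j) by omega]
  have hright : ∀ i, j + 1 ≤ i →
      (HasMatch k U (glue k (2 * n) (2 * j) V G H) (2 * i) ↔ HasMatch k U H (2 * (i - j))) :=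
    fun i hi => by rw [hasMatch_glue_right hV hVc hH' (by omega), Nat.mul_sub]
  rw [mch2Count_eq_card]
  refine card_nbij' (· - j) (· + j) (fun i hi => ?_) (fun i hi => ?_) (fun i hi => ?_)
    (fun i _ => Nat.add_sub_cancel i j)
  · simp only [coe_filter, Set.mem_ofPred_eq, mem_Ico] at hi ⊢
    exact ⟨by omega, (hright i hi.1.1).1 hi.2⟩
  · simp only [coe_filter, Set.mem_ofPred_eq, mem_Ico] at hi ⊢
    refine ⟨by omega, (hright (i + j) (by omega)).2 ?_⟩
    rw [Nat.add_sub_cancel]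
    exact hi.2
  · simp only [coe_filter, Set.mem_ofPred_eq, mem_Ico] at hi
    show i - j + j = i
    omega

theorem sum_fillings_prefixMatched (hjn : j ≤ n) :
    ∑ F ∈ fillings (2 * n) k, (if OddFull (2 * n) k U F ∧ ∀ i ∈ Ico 1 j, HasMatch k U F (2 * i)
        then x ^ #{i ∈ Ico (j + 1) n | HasMatch k U F (2 * i)} else 0) =
      ((k * (2 * n)).choose (k * (2 * j)) * fullCount (2 * j) k U : ℕ) *
        oddFullWeight x (2 * (n - j)) k U := by
  rw [sum_fillings_eq_sum_glue (c := 2 * j) (by omega), show 2 * n - 2 * j = 2 * (n - j) by omega]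
  calc _ = ∑ V ∈ powersetCard (k * (2 * j)) (Icc 1 (k * (2 * n))), ∑ G ∈ fillings (2 * j) k,
        if ∀ i, 1 ≤ i → i ≤ 2 * j - 1 → HasMatch k U G i then oddFullWeight x (2 * (n - j)) k U
          else 0 := by
        refine sum_congr rfl fun V hV => sum_congr rfl fun G hG => ?_
        rw [mem_powersetCard] at hV
        rw [mem_fillings] at hG
        by_cases hfull : ∀ i, 1 ≤ i → i ≤ 2 * j - 1 → HasMatch k U G i
        · rw [if_pos hfull, oddFullWeight]
          refine sum_congr rfl fun H hH => ?_
          rw [mem_fillings] at hH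
          rw [if_congr (oddFull_glue_iff hjn hV.1 hV.2 hG hH) rfl rfl,
            card_filter_hasMatch_glue hjn hV.1 hV.2 hH, ite_and, if_pos hfull]
        · rw [if_neg hfull]
          exact sum_eq_zero fun H hH =>
            if_neg fun h => hfull ((oddFull_glue_iff hjn hV.1 hV.2 hG (mem_fillings.1 hH)).1 h).1
    _ = _ := by
        rw [sum_const, card_powersetCard, Nat.card_Icc, Nat.add_sub_cancel, fullCount_eq_card,
          card_eq_sum_ones, sum_filter, Nat.cast_mul, Nat.cast_sum, mul_assoc, sum_mul,
          nsmul_eq_mul]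
        simp only [Nat.cast_ite, Nat.cast_one, Nat.cast_zero, boole_mul]
        exact congrArg _ (sum_congr rfl fun _ _ => by congr)

theorem oddFullWeight_eq_sum (hn : 1 ≤ n) :
    oddFullWeight x (2 * n) k U = ∑ j ∈ Icc 1 n,
      ((k * (2 * n)).choose (k * (2 * j)) * fullCount (2 * j) k U : ℕ) * (x - 1) ^ (j - 1) *
        oddFullWeight x (2 * (n - j)) k U := by
  calc oddFullWeight x (2 * n) k U
      = ∑ F ∈ fillings (2 * n) k, ∑ j ∈ Icc 1 n, (x - 1) ^ (j - 1) *
          if OddFull (2 * n) k U F ∧ ∀ i ∈ Ico 1 j, HasMatch k U F (2 * i)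
          then x ^ #{i ∈ Ico (j + 1) n | HasMatch k U F (2 * i)} else 0 := by
        refine sum_congr rfl fun F _ => ?_
        by_cases hF : OddFull (2 * n) k U F
        · simp only [hF, true_and, if_true, mch2Count_eq_card,
            pow_card_filter_Ico_eq_sum x _ hn, mul_ite, mul_zero]
        · simp [hF]
    _ = _ := by
        rw [sum_comm]
        refine sum_congr rfl fun j hj => ?_
        rw [mem_Icc] at hj
        rw [← mul_sum, sum_fillings_prefixMatched x hj.2]
        ring

end Weight

open Polynomial

variable {k n : ℕ} {U : Set (ℕ → ℕ → ℕ)}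

noncomputable def normalizedWeight (k : ℕ) (U : Set (ℕ → ℕ → ℕ)) (n : ℕ) : ℚ[X] :=
  C ((k * (2 * n)).factorial : ℚ)⁻¹ * oddFullWeight X (2 * n) k U

theorem normalizedWeight_zero : normalizedWeight k U 0 = 1 := by
  simp [normalizedWeight, oddFullWeight_zero]

theorem normalizedWeight_eq_sum (hn : 1 ≤ n) :
    normalizedWeight k U n = ∑ j ∈ Icc 1 n,
      (X - 1) ^ (j - 1) * C ((fullCount (2 * j) k U : ℚ) / (k * (2 * j)).factorial) *
        normalizedWeight k U (n - j) := by
  rw [normalizedWeight, oddFullWeight_eq_sum X hn, mul_sum]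
  refine sum_congr rfl fun j hj => ?_
  rw [mem_Icc] at hj
  have hsplit : k * (2 * n) - k * (2 * j) = k * (2 * (n - j)) := by
    rw [← Nat.mul_sub, Nat.mul_sub 2 n j]
  have hscalar : ((k * (2 * n)).factorial : ℚ)⁻¹ *
      (((k * (2 * n)).choose (k * (2 * j)) * fullCount (2 * j) k U : ℕ) : ℚ) =
        (fullCount (2 * j) k U : ℚ) / (k * (2 * j)).factorial *
          ((k * (2 * (n - j))).factorial : ℚ)⁻¹ := by
    rw [Nat.cast_mul, Nat.cast_choose ℚ (Nat.mul_le_mul_left k (by omega)), hsplit]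
    field_simp
  rw [normalizedWeight, ← map_natCast C, mul_assoc, ← mul_assoc (C _), ← C_mul, hscalar, C_mul]
  ring

end Filling

theorem stmt8_general (k : ℕ) (U : Set (ℕ → ℕ → ℕ)) :
    (PowerSeries.mk fun m => if m = 0 then (1 : Polynomial ℚ) else
        if m % 2 = 0 then
          Polynomial.C (((k * m).factorial : ℚ))⁻¹ *
            ∑ᶠ F ∈ {F : ℕ → ℕ → ℕ | OddFull m k U F},
              (Polynomial.X : Polynomial ℚ) ^ mch2Count m k U F
        else 0) *
    (PowerSeries.mk fun m => if m = 0 then (1 : Polynomial ℚ) else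
        if m % 2 = 0 then
          -((Polynomial.X - 1) ^ (m / 2 - 1) *
            Polynomial.C ((fullCount m k U : ℚ) / ((k * m).factorial : ℚ)))
        else 0) = 1 := by
  rw [PowerSeries.mk_ite_even_eq_expand, PowerSeries.mk_ite_even_eq_expand, ← map_mul]
  have hweight : ∀ n, (if n = 0 then 1 else Polynomial.C ((k * (2 * n)).factorial : ℚ)⁻¹ *
      ∑ᶠ F ∈ {F | OddFull (2 * n) k U F}, Polynomial.X ^ mch2Count (2 * n) k U F) =
        Filling.normalizedWeight k U n := by
    intro n
    split_ifs with hn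
    · rw [hn, Filling.normalizedWeight_zero]
    · rw [Filling.finsum_eq_oddFullWeight, Filling.normalizedWeight]
  simp only [hweight, Nat.mul_div_cancel_left _ two_pos]
  rw [PowerSeries.mk_mul_mk_one_sub_eq_one Filling.normalizedWeight_zero fun n hn =>
    Filling.normalizedWeight_eq_sum hn, map_one]

/-- Theorem: `(1 + Σ_{n≥1} (t^{2n}/(2kn)!) Σ_{F ∈ F^{(2),Υ}_{2n,k}} x^{Υ-mch^{(2)}(F)}) ·
(1 - Σ_{n≥1} (x-1)^{n-1} t^{2n} full_{2n}^Υ/(2kn)!) = 1` as formal power series in `t`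
over `ℚ[x]` (the coefficient of `t^m` is indexed by `m = 2n`). -/
theorem stmt8 (k : ℕ) (hk : 1 ≤ k) (U : Set (ℕ → ℕ → ℕ))
    (hU : ∀ P ∈ U, IsFilling 2 k P) :
    (PowerSeries.mk fun m => if m = 0 then (1 : Polynomial ℚ) else
        if m % 2 = 0 then
          Polynomial.C (((k * m).factorial : ℚ))⁻¹ *
            ∑ᶠ F ∈ {F : ℕ → ℕ → ℕ | OddFull m k U F},
              (Polynomial.X : Polynomial ℚ) ^ mch2Count m k U F
        else 0) *
    (PowerSeries.mk fun m => if m = 0 then (1 : Polynomial ℚ) else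
        if m % 2 = 0 then
          -((Polynomial.X - 1) ^ (m / 2 - 1) *
            Polynomial.C ((fullCount m k U : ℚ) / ((k * m).factorial : ℚ)))
        else 0) = 1 :=
  stmt8_general k U
end
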